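/- arXiv:2508.18457 — 4 statements merged into one kernel-verified Lean document; each statement's English description precedes it below -/
import Mathlib

section
/- Let G be a finite simple graph with an odd number of vertices. Then G is reconfigurable if and only if for every edge e = uv of G at least one of the following holds: (1) e is contained in every odd matching of G or e is contained in no odd matching of G; (2) at least one of the vertex-deleted subgraphs G − u and G − v contains a perfect matching. -/
/-- A vertex `v` is covered by the matching `M` if some edge of `M` contains it. -/
def Covers {V : Type*} (M : Set (Sym2 V)) (v : V) : Prop := ∃ e ∈ M, v ∈ e

/-- `M` is a matching of `G`: a set of edges of `G`, no two of which share a vertex. -/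
def IsMatchingOn {V : Type*} (G : SimpleGraph V) (M : Set (Sym2 V)) : Prop :=
  M ⊆ G.edgeSet ∧ ∀ e ∈ M, ∀ f ∈ M, e ≠ f → ∀ v : V, v ∈ e → v ∉ f

/-- `M` is an odd matching of `G`: a matching such that exactly one vertex is uncovered. -/
def IsOddMatching {V : Type*} (G : SimpleGraph V) (M : Set (Sym2 V)) : Prop :=
  IsMatchingOn G M ∧ ∃! v : V, ¬ Covers M v

/-- A flip transforms the odd matching `M` with isolated vertex `u` into
`M' = (M \ {vw}) ∪ {uv}`, where `uv` is an edge of `G` and `vw` is an edge of `M`. -/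
def Flip {V : Type*} (G : SimpleGraph V) (M M' : Set (Sym2 V)) : Prop :=
  IsOddMatching G M ∧
  ∃ u v w : V, ¬ Covers M u ∧ s(u, v) ∈ G.edgeSet ∧ s(v, w) ∈ M ∧
    M' = (M \ {s(v, w)}) ∪ {s(u, v)}

/-- `M` can be reconfigured to `M'` by some finite sequence of flips. -/
def Reconfig {V : Type*} (G : SimpleGraph V) (M M' : Set (Sym2 V)) : Prop :=
  Relation.ReflTransGen (Flip G) M M'

/-- `G` is reconfigurable: every odd matching can be reconfigured to every other one. -/
def Reconfigurable {V : Type*} (G : SimpleGraph V) : Prop :=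
  ∀ M M' : Set (Sym2 V), IsOddMatching G M → IsOddMatching G M' → Reconfig G M M'

/-- `M` can be transformed into `M'` by a flip sequence of length exactly `k`. -/
def FlipSeq {V : Type*} (G : SimpleGraph V) (M M' : Set (Sym2 V)) (k : ℕ) : Prop :=
  ∃ f : ℕ → Set (Sym2 V), f 0 = M ∧ f k = M' ∧ ∀ i < k, Flip G (f i) (f (i + 1))

/-- The graph obtained from `G` by deleting the vertex set `s` has a perfect matching:
a matching of `G` avoiding the vertices of `s` and covering all other vertices. -/
def HasPerfectMatchingAvoiding {V : Type*} (G : SimpleGraph V) (s : Set V) : Prop :=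
  ∃ M : Set (Sym2 V), IsMatchingOn G M ∧ (∀ e ∈ M, ∀ v : V, v ∈ e → v ∉ s) ∧
    ∀ v : V, v ∉ s → Covers M v

open scoped symmDiff

namespace OMach

variable {V : Type*} {G : SimpleGraph V}

lemma covers_iff {M : Set (Sym2 V)} {x : V} : Covers M x ↔ ∃ y, s(x, y) ∈ M := by
  constructor
  · rintro ⟨e, heM, hxe⟩
    induction e using Sym2.ind with
    | _ a b =>
      rcases Sym2.mem_iff.mp hxe with rfl | rfl
      · exact ⟨b, heM⟩
      · exact ⟨a, by rwa [Sym2.eq_swap]⟩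
  · rintro ⟨y, hy⟩
    exact ⟨s(x, y), hy, Sym2.mem_mk_left x y⟩

lemma matching_unique {M : Set (Sym2 V)} (hM : IsMatchingOn G M) {x a b : V}
    (ha : s(x, a) ∈ M) (hb : s(x, b) ∈ M) : a = b := by
  by_cases h : s(x, a) = s(x, b)
  · rcases Sym2.eq_iff.mp h with ⟨_, h2⟩ | ⟨h1, h2⟩
    · exact h2
    · exact h2.trans h1
  · exact absurd (Sym2.mem_mk_left x b) (hM.2 _ ha _ hb h x (Sym2.mem_mk_left x a))

lemma edge_ne {M : Set (Sym2 V)} (hsub : M ⊆ G.edgeSet) {a b : V} (h : s(a, b) ∈ M) :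
    a ≠ b := (G.mem_edgeSet.mp (hsub h)).ne

lemma not_covers_mem {M : Set (Sym2 V)} {u : V} (hu : ¬ Covers M u) {y : V} :
    s(u, y) ∉ M := fun h => hu ⟨_, h, Sym2.mem_mk_left u y⟩

lemma hole_all {M : Set (Sym2 V)} (hM : IsOddMatching G M) {u : V} (hu : ¬ Covers M u)
    {x : V} (hx : x ≠ u) : Covers M x := by
  obtain ⟨v, hv, huniq⟩ := hM.2
  by_contra hc
  exact hx ((huniq x hc).trans (huniq u hu).symm)

open Classical in
noncomputable def pt (M : Set (Sym2 V)) (x : V) : V :=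
  if h : ∃ y, s(x, y) ∈ M then h.choose else x

lemma pt_mem {M : Set (Sym2 V)} {x : V} (h : ∃ y, s(x, y) ∈ M) : s(x, pt M x) ∈ M := by
  rw [pt, dif_pos h]; exact h.choose_spec

lemma pt_eq {M : Set (Sym2 V)} (hM : IsMatchingOn G M) {x y : V} (h : s(x, y) ∈ M) :
    pt M x = y := matching_unique hM (pt_mem ⟨y, h⟩) h

lemma mem_of_mem_covering {M : Set (Sym2 V)} (hM : IsMatchingOn G M) {x y : V} {e : Sym2 V}
    (he : e ∈ M) (hxe : x ∈ e) (hxy : s(x, y) ∈ M) : e = s(x, y) := by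
  by_contra h
  exact hM.2 _ he _ hxy h x hxe (Sym2.mem_mk_left x y)

lemma flip_core {M : Set (Sym2 V)} (hM : IsOddMatching G M) {u v w : V}
    (hu : ¬ Covers M u) (hG : s(u, v) ∈ G.edgeSet) (hvw : s(v, w) ∈ M) :
    Flip G M ((M \ {s(v, w)}) ∪ {s(u, v)}) ∧
    IsOddMatching G ((M \ {s(v, w)}) ∪ {s(u, v)}) ∧
    ¬ Covers ((M \ {s(v, w)}) ∪ {s(u, v)}) w ∧
    (M \ {s(v, w)}) ∪ {s(u, v)} = M ∆ {s(v, w), s(u, v)} := by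
  have huv : u ≠ v := (G.mem_edgeSet.mp hG).ne
  have hvw' : v ≠ w := edge_ne hM.1.1 hvw
  have huw : u ≠ w := by
    rintro rfl
    exact hu ⟨_, hvw, Sym2.mem_mk_right v u⟩
  have hsuvM : s(u, v) ∉ M := not_covers_mem hu
  have hne : s(u, v) ≠ s(v, w) := by
    intro h
    rcases Sym2.eq_iff.mp h with ⟨h1, h2⟩ | ⟨h1, h2⟩
    · exact huv h1
    · exact huw h1
  set M' := (M \ {s(v, w)}) ∪ {s(u, v)} with hM'def
  have hmatch : IsMatchingOn G M' := by
    constructor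
    · rintro e (⟨heM, -⟩ | he)
      · exact hM.1.1 heM
      · rw [Set.mem_singleton_iff] at he; rw [he]; exact hG
    · rintro e he f hf hef x hxe hxf
      rcases he with ⟨heM, hevw⟩ | he
      · rcases hf with ⟨hfM, hfvw⟩ | hf
        · exact hM.1.2 _ heM _ hfM hef x hxe hxf
        · rw [Set.mem_singleton_iff] at hf; subst hf
          rcases Sym2.mem_iff.mp hxf with rfl | rfl
          · exact hu ⟨_, heM, hxe⟩
          · exact hevw (mem_of_mem_covering hM.1 heM hxe hvw)
      · rw [Set.mem_singleton_iff] at he; subst he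
        rcases hf with ⟨hfM, hfvw⟩ | hf
        · rcases Sym2.mem_iff.mp hxe with rfl | rfl
          · exact hu ⟨_, hfM, hxf⟩
          · exact hfvw (mem_of_mem_covering hM.1 hfM hxf hvw)
        · rw [Set.mem_singleton_iff] at hf; exact hef (hf ▸ rfl)
  have hwunc : ¬ Covers M' w := by
    rintro ⟨e, he, hwe⟩
    rcases he with ⟨heM, hevw⟩ | he
    · exact hevw (by rw [Sym2.eq_swap] at hvw ⊢; exact mem_of_mem_covering hM.1 heM hwe hvw)
    · rw [Set.mem_singleton_iff] at he; subst he
      rcases Sym2.mem_iff.mp hwe with rfl | rfl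
      · exact huw rfl
      · exact hvw' rfl
  have hodd : IsOddMatching G M' := by
    refine ⟨hmatch, w, hwunc, fun y hy => ?_⟩
    by_contra hyw
    apply hy
    by_cases hyu : y = u
    · exact ⟨s(u, v), Set.mem_union_right _ rfl, hyu ▸ Sym2.mem_mk_left u v⟩
    by_cases hyv : y = v
    · exact ⟨s(u, v), Set.mem_union_right _ rfl, hyv ▸ Sym2.mem_mk_right u v⟩
    obtain ⟨e, heM, hye⟩ := hole_all hM hu hyu
    refine ⟨e, Set.mem_union_left _ ⟨heM, fun hevw => ?_⟩, hye⟩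
    rw [hevw] at hye
    rcases Sym2.mem_iff.mp hye with rfl | rfl
    · exact hyv rfl
    · exact hyw rfl
  refine ⟨⟨hM, u, v, w, hu, hG, hvw, rfl⟩, hodd, hwunc, ?_⟩
  ext f
  simp only [hM'def, Set.mem_union, Set.mem_diff, Set.mem_singleton_iff, Set.mem_symmDiff,
    Set.mem_insert_iff]
  constructor
  · rintro (⟨hfM, hfvw⟩ | rfl)
    · exact Or.inl ⟨hfM, fun h => by rcases h with h | h; exact hfvw h; exact hsuvM (h ▸ hfM)⟩
    · exact Or.inr ⟨Or.inr rfl, hsuvM⟩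
  · rintro (⟨hfM, hf⟩ | ⟨hf | hf, hfM⟩)
    · exact Or.inl ⟨hfM, fun h => hf (Or.inl h)⟩
    · exact absurd (hf ▸ hvw) hfM
    · exact Or.inr hf

lemma flip_symm {M M' : Set (Sym2 V)} (h : Flip G M M') : Flip G M' M := by
  obtain ⟨hM, u, v, w, hu, hG, hvw, rfl⟩ := h
  obtain ⟨-, hM', hw, -⟩ := flip_core hM hu hG hvw
  have hsuvM : s(u, v) ∉ M := not_covers_mem hu
  refine ⟨hM', w, v, u, hw, ?_, ?_, ?_⟩
  · rw [Sym2.eq_swap]; exact hM.1.1 hvw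
  · exact Set.mem_union_right _ (Set.mem_singleton_iff.mpr Sym2.eq_swap)
  · rw [Sym2.eq_swap (a := v) (b := u), Sym2.eq_swap (a := w) (b := v)]
    ext f
    simp only [Set.mem_union, Set.mem_diff, Set.mem_singleton_iff]
    constructor
    · intro hf
      by_cases hfvw : f = s(v, w)
      · exact Or.inr hfvw
      · exact Or.inl ⟨Or.inl ⟨hf, hfvw⟩, fun h => hsuvM (h ▸ hf)⟩
    · rintro (⟨⟨⟨hfM, -⟩ | rfl, hfne⟩⟩ | rfl)
      · exact hfM
      · exact absurd rfl hfne
      · exact hvw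

lemma flip_odd {M M' : Set (Sym2 V)} (h : Flip G M M') : IsOddMatching G M' := by
  obtain ⟨hM, u, v, w, hu, hG, hvw, rfl⟩ := h
  exact (flip_core hM hu hG hvw).2.1

lemma reconfig_symm {M M' : Set (Sym2 V)} (h : Reconfig G M M') : Reconfig G M' M := by
  induction h with
  | refl => exact Relation.ReflTransGen.refl
  | tail _ hbc ih => exact (Relation.ReflTransGen.single (flip_symm hbc)).trans ih

lemma avoiding_iff_hole {v : V} :
    HasPerfectMatchingAvoiding G {v} ↔ ∃ M, IsOddMatching G M ∧ ¬ Covers M v := by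
  constructor
  · rintro ⟨M, hmatch, havoid, hcov⟩
    have hv : ¬ Covers M v := fun ⟨e, he, hve⟩ => havoid e he v hve rfl
    refine ⟨M, ⟨hmatch, v, hv, fun y hy => ?_⟩, hv⟩
    by_contra hyv
    exact hy (hcov y hyv)
  · rintro ⟨M, hM, hv⟩
    refine ⟨M, hM.1, ?_, ?_⟩
    · rintro e he x hxe rfl
      exact hv ⟨e, he, hxe⟩
    · intro x hx
      exact hole_all hM hv hx

open Classical in
noncomputable def wk {V : Type*} (A B : Set (Sym2 V)) (u : V) : ℕ → V
  | 0 => u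
  | n+1 => if Even n then pt A (wk A B u n) else pt B (wk A B u n)

variable {V : Type*} {G : SimpleGraph V}

lemma wk_zero {A B : Set (Sym2 V)} {u : V} : wk A B u 0 = u := rfl

lemma wk_succ {A B : Set (Sym2 V)} {u : V} (n : ℕ) :
    wk A B u (n+1) = if Even n then pt A (wk A B u n) else pt B (wk A B u n) := rfl

/-- Combined edge-validity and injectivity for the alternating walk between two holes. -/
lemma path_combined {M N : Set (Sym2 V)} (hM : IsOddMatching G M) (hN : IsOddMatching G N)
    {u u' : V} (hu : ¬ Covers M u) (hu' : ¬ Covers N u') :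
    ∀ n, (∀ i, 2*i < n → wk N M u (2*i) ≠ u') →
      (∀ j < n, s(wk N M u j, wk N M u (j+1)) ∈ (if Even j then N else M)) ∧
      (∀ a ≤ n, ∀ b ≤ n, wk N M u a = wk N M u b → a = b) := by
  intro n
  induction n with
  | zero =>
    exact fun _ => ⟨fun j hj => absurd hj (Nat.not_lt_zero j),
      fun a ha b hb _ => by omega⟩
  | succ n ih =>
    intro hstop
    obtain ⟨hedges, hinj⟩ := ih (fun i hi => hstop i (by omega))
    set w := wk N M u with hwdef
    have hedgen : s(w n, w (n+1)) ∈ (if Even n then N else M) := by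
      by_cases hev : Even n
      · have hne : w n ≠ u' := by
          obtain ⟨r, hr⟩ := hev
          have h2r : 2*r = n := by omega
          rw [← h2r]
          exact hstop r (by omega)
        obtain ⟨y, hy⟩ := covers_iff.mp (hole_all hN hu' hne)
        have hsucc : w (n+1) = pt N (w n) := by rw [hwdef, wk_succ, if_pos hev]
        rw [hsucc, if_pos hev]
        exact pt_mem ⟨y, hy⟩
      · have hne : w n ≠ u := by
          intro h
          have hn0 := hinj n le_rfl 0 (by omega) (by rw [h, hwdef, wk_zero])
          rw [hn0] at hev
          exact hev Even.zero
        obtain ⟨y, hy⟩ := covers_iff.mp (hole_all hM hu hne)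
        have hsucc : w (n+1) = pt M (w n) := by rw [hwdef, wk_succ, if_neg hev]
        rw [hsucc, if_neg hev]
        exact pt_mem ⟨y, hy⟩
    have hedges' : ∀ j < n+1, s(w j, w (j+1)) ∈ (if Even j then N else M) := by
      intro j hj
      rcases Nat.lt_or_ge j n with h | h
      · exact hedges j h
      · have hjn : j = n := by omega
        rw [hjn]; exact hedgen
    have key : ∀ b ≤ n, w (n+1) ≠ w b := by
      intro b hb heq
      by_cases hnev : Even (n+1) <;> by_cases hbev : Even b
      · -- both even : same parity, edges into both ends lie in M
        have hnodd : ¬ Even n := Nat.even_add_one.mp hnev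
        have e2 : s(w n, w (n+1)) ∈ M := by simpa [if_neg hnodd] using hedges' n (by omega)
        cases b with
        | zero =>
          rw [heq, hwdef, wk_zero] at e2
          exact hu ⟨_, e2, Sym2.mem_mk_right _ u⟩
        | succ c =>
          have hcodd : ¬ Even c := Nat.even_add_one.mp hbev
          have e1 : s(w c, w (c+1)) ∈ M := by simpa [if_neg hcodd] using hedges' c (by omega)
          have e1' : s(w (c+1), w c) ∈ M := by rwa [Sym2.eq_swap] at e1
          rw [heq] at e2
          have e2' : s(w (c+1), w n) ∈ M := by rwa [Sym2.eq_swap] at e2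
          have hcn := hinj c (by omega) n le_rfl (matching_unique hM.1 e1' e2')
          omega
      · -- n+1 even, b odd : parity differs, both edges in M
        have hnodd : ¬ Even n := Nat.even_add_one.mp hnev
        have e2 : s(w n, w (n+1)) ∈ M := by simpa [if_neg hnodd] using hedges' n (by omega)
        rcases Nat.lt_or_ge b n with hbn | hbn
        · have e1 : s(w b, w (b+1)) ∈ M := by simpa [if_neg hbev] using hedges' b (by omega)
          rw [heq] at e2
          have e2' : s(w b, w n) ∈ M := by rwa [Sym2.eq_swap] at e2
          have hbn1 := hinj (b+1) (by omega) n le_rfl (matching_unique hM.1 e1 e2')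
          rw [← hbn1] at hnodd
          exact hnodd ((Nat.even_add_one).mpr hbev)
        · have hbn' : b = n := by omega
          rw [hbn'] at heq
          rw [heq] at e2
          exact edge_ne hM.1.1 e2 rfl
      · -- n+1 odd, b even : parity differs, both edges in N
        have hnevn : Even n := by
          rw [Nat.even_add_one] at hnev
          exact not_not.mp hnev
        have e2 : s(w n, w (n+1)) ∈ N := by simpa [if_pos hnevn] using hedges' n (by omega)
        rcases Nat.lt_or_ge b n with hbn | hbn
        · have e1 : s(w b, w (b+1)) ∈ N := by simpa [if_pos hbev] using hedges' b (by omega)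
          rw [heq] at e2
          have e2' : s(w b, w n) ∈ N := by rwa [Sym2.eq_swap] at e2
          have hbn1 := hinj (b+1) (by omega) n le_rfl (matching_unique hN.1 e1 e2')
          rw [← hbn1] at hnevn
          exact (Nat.even_add_one.mp hnevn) hbev
        · have hbn' : b = n := by omega
          rw [hbn'] at heq
          rw [heq] at e2
          exact edge_ne hN.1.1 e2 rfl
      · -- both odd : same parity, edges in N
        have hnevn : Even n := by
          rw [Nat.even_add_one] at hnev
          exact not_not.mp hnev
        have e2 : s(w n, w (n+1)) ∈ N := by simpa [if_pos hnevn] using hedges' n (by omega)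
        cases b with
        | zero => exact hbev Even.zero
        | succ c =>
          have hcev : Even c := by
            by_contra h
            exact hbev (Nat.even_add_one.mpr h)
          have e1 : s(w c, w (c+1)) ∈ N := by simpa [if_pos hcev] using hedges' c (by omega)
          have e1' : s(w (c+1), w c) ∈ N := by rwa [Sym2.eq_swap] at e1
          rw [heq] at e2
          have e2' : s(w (c+1), w n) ∈ N := by rwa [Sym2.eq_swap] at e2
          have hcn := hinj c (by omega) n le_rfl (matching_unique hN.1 e1' e2')
          omega
    have hinj' : ∀ a ≤ n+1, ∀ b ≤ n+1, w a = w b → a = b := by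
      intro a ha b hb hab
      rcases Nat.lt_or_ge a (n+1) with ha' | ha' <;> rcases Nat.lt_or_ge b (n+1) with hb' | hb'
      · exact hinj a (by omega) b (by omega) hab
      · have hb1 : b = n+1 := by omega
        rw [hb1] at hab
        exact absurd hab.symm (key a (by omega))
      · have ha1 : a = n+1 := by omega
        rw [ha1] at hab
        exact absurd hab (key b (by omega))
      · omega
    exact ⟨hedges', hinj'⟩

lemma even_two_mul' (i : ℕ) : Even (2*i) := ⟨i, by ring⟩

lemma odd_two_mul_add_one (i : ℕ) : ¬ Even (2*i+1) := by
  rintro ⟨r, hr⟩; omega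

lemma path_between_holes [Fintype V] {M N : Set (Sym2 V)} (hM : IsOddMatching G M)
    (hN : IsOddMatching G N) {u u' : V} (hu : ¬ Covers M u) (hu' : ¬ Covers N u')
    (huu : u ≠ u') :
    ∃ k, 1 ≤ k ∧ ∃ p : ℕ → V, p 0 = u ∧ p (2*k) = u' ∧
      (∀ a ≤ 2*k, ∀ b ≤ 2*k, p a = p b → a = b) ∧
      (∀ i < k, s(p (2*i), p (2*i+1)) ∈ N ∧ s(p (2*i), p (2*i+1)) ∉ M) ∧
      (∀ i < k, s(p (2*i+1), p (2*i+2)) ∈ M ∧ s(p (2*i+1), p (2*i+2)) ∉ N) := by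
  classical
  set w := wk N M u with hwdef
  have hex : ∃ i, w (2*i) = u' := by
    by_contra hcon
    push_neg at hcon
    set C := Fintype.card V with hC
    obtain ⟨-, hinj⟩ := path_combined hM hN hu hu' (2*C+2) (fun i _ => hcon i)
    have hinjf : Function.Injective (fun i : Fin (2*C+2) => w i.val) := by
      intro a b hab
      exact Fin.ext (hinj a.val (by omega) b.val (by omega) hab)
    have := Fintype.card_le_of_injective _ hinjf
    simp only [Fintype.card_fin] at this
    omega
  set k := Nat.find hex with hkdef
  have hk : w (2*k) = u' := Nat.find_spec hex
  have hmin : ∀ i < k, w (2*i) ≠ u' := fun i hi => Nat.find_min hex hi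
  obtain ⟨hedges, hinj⟩ := path_combined hM hN hu hu' (2*k)
    (fun i hi => hmin i (by omega))
  have hk1 : 1 ≤ k := by
    rcases Nat.eq_zero_or_pos k with h | h
    · rw [h] at hk
      exact absurd (by rw [← hk]; rfl) huu
    · exact h
  have hNedge : ∀ i < k, s(w (2*i), w (2*i+1)) ∈ N := by
    intro i hi
    have := hedges (2*i) (by omega)
    rwa [if_pos (even_two_mul' i)] at this
  have hMedge : ∀ i < k, s(w (2*i+1), w (2*i+2)) ∈ M := by
    intro i hi
    have := hedges (2*i+1) (by omega)
    rwa [if_neg (odd_two_mul_add_one i)] at this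
  refine ⟨k, hk1, w, rfl, hk, hinj, ?_, ?_⟩
  · intro i hi
    refine ⟨hNedge i hi, fun hmem => ?_⟩
    cases i with
    | zero =>
      have h0 : w 0 = u := rfl
      rw [show 2*0 = 0 from rfl, h0] at hmem
      exact not_covers_mem hu hmem
    | succ c =>
      have e1 : s(w (2*c+1), w (2*c+2)) ∈ M := hMedge c (by omega)
      have e1' : s(w (2*c+2), w (2*c+1)) ∈ M := by rwa [Sym2.eq_swap] at e1
      have e2' : s(w (2*c+2), w (2*c+3)) ∈ M := hmem
      have := hinj (2*c+1) (by omega) (2*c+3) (by omega) (matching_unique hM.1 e1' e2')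
      omega
  · intro i hi
    refine ⟨hMedge i hi, fun hmem => ?_⟩
    have e1 : s(w (2*i), w (2*i+1)) ∈ N := hNedge i hi
    have e1' : s(w (2*i+1), w (2*i)) ∈ N := by rwa [Sym2.eq_swap] at e1
    have := hinj (2*i) (by omega) (2*i+2) (by omega) (matching_unique hN.1 e1' hmem)
    omega

def pedges (p : ℕ → V) (k : ℕ) : Set (Sym2 V) :=
  {e | ∃ i < k, e = s(p (2*i), p (2*i+1))} ∪ {e | ∃ i < k, e = s(p (2*i+1), p (2*i+2))}

lemma holeWalk : ∀ (k : ℕ) (p : ℕ → V) (M : Set (Sym2 V)),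
    IsOddMatching G M → ¬ Covers M (p 0) →
    (∀ a ≤ 2*k, ∀ b ≤ 2*k, p a = p b → a = b) →
    (∀ i < k, s(p (2*i), p (2*i+1)) ∈ G.edgeSet) →
    (∀ i < k, s(p (2*i+1), p (2*i+2)) ∈ M) →
    Reconfig G M (M ∆ pedges p k) ∧
    IsOddMatching G (M ∆ pedges p k) ∧ ¬ Covers (M ∆ pedges p k) (p (2*k)) := by
  intro k
  induction k with
  | zero =>
    intro p M hM h0 _ _ _
    have hempty : pedges p 0 = (⊥ : Set (Sym2 V)) := by
      ext f
      simp [pedges]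
    rw [hempty, symmDiff_bot]
    exact ⟨Relation.ReflTransGen.refl, hM, h0⟩
  | succ k ih =>
    intro p M hM h0 hinj hGe hMe
    have hG0 : s(p 0, p 1) ∈ G.edgeSet := hGe 0 (by omega)
    have hM0 : s(p 1, p 2) ∈ M := hMe 0 (by omega)
    obtain ⟨hflip, hodd1, hhole1, heq1⟩ := flip_core hM h0 hG0 hM0
    set M₁ := (M \ {s(p 1, p 2)}) ∪ {s(p 0, p 1)} with hM₁def
    have sne : ∀ {a b c d : ℕ}, a ≤ 2*(k+1) → b ≤ 2*(k+1) → c ≤ 2*(k+1) → d ≤ 2*(k+1) →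
        ¬((a = c ∧ b = d) ∨ (a = d ∧ b = c)) → s(p a, p b) ≠ s(p c, p d) := by
      intro a b c d ha hb hc hd hnot h
      rcases Sym2.eq_iff.mp h with ⟨h1, h2⟩ | ⟨h1, h2⟩
      · exact hnot (Or.inl ⟨hinj a ha c hc h1, hinj b hb d hd h2⟩)
      · exact hnot (Or.inr ⟨hinj a ha d hd h1, hinj b hb c hc h2⟩)
    obtain ⟨hrec2, hodd2, hhole2⟩ := ih (fun i => p (i+2)) M₁ hodd1 hhole1
      (fun a ha b hb hab => by
        have := hinj (a+2) (by omega) (b+2) (by omega) hab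
        omega)
      (fun i hi => hGe (i+1) (by omega))
      (fun i hi => by
        have hmem : s(p (2*i+3), p (2*i+4)) ∈ M := hMe (i+1) (by omega)
        refine Set.mem_union_left _ ⟨hmem, ?_⟩
        simp only [Set.mem_singleton_iff]
        exact sne (by omega) (by omega) (by omega) (by omega) (by omega))
    have hdisj : Disjoint ({s(p 1, p 2), s(p 0, p 1)} : Set (Sym2 V))
        (pedges (fun i => p (i+2)) k) := by
      rw [Set.disjoint_left]
      rintro f (rfl | rfl) hf <;>
        rcases hf with ⟨i, hi, hfe⟩ | ⟨i, hi, hfe⟩ <;>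
        exact sne (by omega) (by omega) (by omega) (by omega) (by omega) hfe
    have hP : ({s(p 1, p 2), s(p 0, p 1)} : Set (Sym2 V)) ∆ pedges (fun i => p (i+2)) k =
        pedges p (k+1) := by
      rw [hdisj.symmDiff_eq_sup]
      ext f
      simp only [Set.sup_eq_union, Set.mem_union, Set.mem_insert_iff, Set.mem_singleton_iff,
        pedges, Set.mem_setOf_eq]
      constructor
      · rintro ((rfl | rfl) | ⟨i, hi, rfl⟩ | ⟨i, hi, rfl⟩)
        · exact Or.inr ⟨0, by omega, rfl⟩
        · exact Or.inl ⟨0, by omega, rfl⟩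
        · exact Or.inl ⟨i+1, by omega, rfl⟩
        · exact Or.inr ⟨i+1, by omega, rfl⟩
      · rintro (⟨i, hi, rfl⟩ | ⟨i, hi, rfl⟩)
        · cases i with
          | zero => exact Or.inl (Or.inr rfl)
          | succ j => exact Or.inr (Or.inl ⟨j, by omega, rfl⟩)
        · cases i with
          | zero => exact Or.inl (Or.inl rfl)
          | succ j => exact Or.inr (Or.inr ⟨j, by omega, rfl⟩)
    have hfinal : M ∆ pedges p (k+1) = M₁ ∆ pedges (fun i => p (i+2)) k := by
      rw [heq1, symmDiff_assoc, hP]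
    refine ⟨?_, by rwa [hfinal], by rwa [hfinal]⟩
    rw [hfinal]
    exact (Relation.ReflTransGen.single hflip).trans hrec2

lemma cycle_edges {M N : Set (Sym2 V)} (hM : IsOddMatching G M) (hN : IsOddMatching G N)
    {u : V} (hu : ¬ Covers M u) (hu' : ¬ Covers N u) {x y₀ : V} (hx : s(x, y₀) ∈ M) :
    ∀ j, s(wk M N x j, wk M N x (j+1)) ∈ (if Even j then M else N) := by
  intro j
  induction j with
  | zero =>
    rw [if_pos Even.zero, wk_succ, if_pos Even.zero, wk_zero]
    exact pt_mem ⟨y₀, hx⟩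
  | succ j ihj =>
    set w := wk M N x with hwdef
    by_cases hev : Even (j+1)
    · have hjodd : ¬ Even j := Nat.even_add_one.mp hev
      have ihj' : s(w j, w (j+1)) ∈ N := by rwa [if_neg hjodd] at ihj
      have hcov : Covers N (w (j+1)) := ⟨_, ihj', Sym2.mem_mk_right _ _⟩
      have hne : w (j+1) ≠ u := fun h => hu' (h ▸ hcov)
      obtain ⟨y, hy⟩ := covers_iff.mp (hole_all hM hu hne)
      rw [if_pos hev, hwdef, wk_succ (j+1), if_pos hev]
      exact pt_mem ⟨y, hy⟩
    · have hjev : Even j := by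
        rw [Nat.even_add_one] at hev
        exact not_not.mp hev
      have ihj' : s(w j, w (j+1)) ∈ M := by rwa [if_pos hjev] at ihj
      have hcov : Covers M (w (j+1)) := ⟨_, ihj', Sym2.mem_mk_right _ _⟩
      have hne : w (j+1) ≠ u := fun h => hu (h ▸ hcov)
      obtain ⟨y, hy⟩ := covers_iff.mp (hole_all hN hu' hne)
      rw [if_neg hev, hwdef, wk_succ (j+1), if_neg hev]
      exact pt_mem ⟨y, hy⟩

lemma cycle_inj {M N : Set (Sym2 V)} (hM : IsOddMatching G M) (hN : IsOddMatching G N)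
    {x : V} (hedges : ∀ j, s(wk M N x j, wk M N x (j+1)) ∈ (if Even j then M else N)) :
    ∀ n, (∀ j, 0 < j → j ≤ n → wk M N x j ≠ x) →
      ∀ a ≤ n, ∀ b ≤ n, wk M N x a = wk M N x b → a = b := by
  intro n
  induction n with
  | zero => exact fun _ a ha b hb _ => by omega
  | succ n ih =>
    intro hret
    have hinj := ih (fun j hj hjn => hret j hj (by omega))
    set w := wk M N x with hwdef
    have hMedge : ∀ j, Even j → s(w j, w (j+1)) ∈ M := fun j hj => by
      have := hedges j; rwa [if_pos hj] at this
    have hNedge : ∀ j, ¬ Even j → s(w j, w (j+1)) ∈ N := fun j hj => by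
      have := hedges j; rwa [if_neg hj] at this
    have key : ∀ b ≤ n, w (n+1) ≠ w b := by
      intro b hb heq
      cases b with
      | zero =>
        exact hret (n+1) (by omega) le_rfl (by rw [heq, hwdef, wk_zero])
      | succ c =>
        by_cases hnev : Even (n+1) <;> by_cases hbev : Even (c+1)
        · -- same parity, both even : incoming edges in N
          have hnodd : ¬ Even n := Nat.even_add_one.mp hnev
          have hcodd : ¬ Even c := Nat.even_add_one.mp hbev
          have e2 : s(w n, w (n+1)) ∈ N := hNedge n hnodd
          have e1 : s(w c, w (c+1)) ∈ N := hNedge c hcodd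
          have e1' : s(w (c+1), w c) ∈ N := by rwa [Sym2.eq_swap] at e1
          rw [heq] at e2
          have e2' : s(w (c+1), w n) ∈ N := by rwa [Sym2.eq_swap] at e2
          have := hinj c (by omega) n le_rfl (matching_unique hN.1 e1' e2')
          omega
        · -- parity differs
          have hnodd : ¬ Even n := Nat.even_add_one.mp hnev
          have e2 : s(w n, w (n+1)) ∈ N := hNedge n hnodd
          rcases Nat.lt_or_ge (c+1) n with hbn | hbn
          · have e1 : s(w (c+1), w (c+2)) ∈ N := hNedge (c+1) hbev
            rw [heq] at e2
            have e2' : s(w (c+1), w n) ∈ N := by rwa [Sym2.eq_swap] at e2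
            have hc2 := hinj (c+2) (by omega) n le_rfl (matching_unique hN.1 e1 e2')
            rw [← hc2] at hnodd
            exact hnodd ((Nat.even_add_one).mpr hbev)
          · have hbn' : c+1 = n := by omega
            rw [hbn'] at heq
            rw [heq] at e2
            exact edge_ne hN.1.1 e2 rfl
        · -- parity differs
          have hnevn : Even n := by
            rw [Nat.even_add_one] at hnev
            exact not_not.mp hnev
          have e2 : s(w n, w (n+1)) ∈ M := hMedge n hnevn
          rcases Nat.lt_or_ge (c+1) n with hbn | hbn
          · have e1 : s(w (c+1), w (c+2)) ∈ M := hMedge (c+1) hbev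
            rw [heq] at e2
            have e2' : s(w (c+1), w n) ∈ M := by rwa [Sym2.eq_swap] at e2
            have hc2 := hinj (c+2) (by omega) n le_rfl (matching_unique hM.1 e1 e2')
            rw [← hc2] at hnevn
            exact (Nat.even_add_one.mp hnevn) hbev
          · have hbn' : c+1 = n := by omega
            rw [hbn'] at heq
            rw [heq] at e2
            exact edge_ne hM.1.1 e2 rfl
        · -- same parity, both odd : incoming edges in M
          have hnevn : Even n := by
            rw [Nat.even_add_one] at hnev
            exact not_not.mp hnev
          have hcev : Even c := by
            by_contra h
            exact hbev (Nat.even_add_one.mpr h)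
          have e2 : s(w n, w (n+1)) ∈ M := hMedge n hnevn
          have e1 : s(w c, w (c+1)) ∈ M := hMedge c hcev
          have e1' : s(w (c+1), w c) ∈ M := by rwa [Sym2.eq_swap] at e1
          rw [heq] at e2
          have e2' : s(w (c+1), w n) ∈ M := by rwa [Sym2.eq_swap] at e2
          have := hinj c (by omega) n le_rfl (matching_unique hM.1 e1' e2')
          omega
    intro a ha b hb hab
    rcases Nat.lt_or_ge a (n+1) with ha' | ha' <;> rcases Nat.lt_or_ge b (n+1) with hb' | hb'
    · exact hinj a (by omega) b (by omega) hab
    · have hb1 : b = n+1 := by omega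
      rw [hb1] at hab
      exact absurd hab.symm (key a (by omega))
    · have ha1 : a = n+1 := by omega
      rw [ha1] at hab
      exact absurd hab (key b (by omega))
    · omega

lemma cycle_from_edge [Fintype V] {M N : Set (Sym2 V)} (hM : IsOddMatching G M)
    (hN : IsOddMatching G N) {u : V} (hu : ¬ Covers M u) (hu' : ¬ Covers N u)
    {x y₀ : V} (hx : s(x, y₀) ∈ M) (hxN : s(x, y₀) ∉ N) :
    ∃ m, 2 ≤ m ∧ ∃ d : ℕ → V, d 0 = x ∧ d (2*m) = x ∧
      (∀ a ≤ 2*m - 1, ∀ b ≤ 2*m - 1, d a = d b → a = b) ∧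
      (∀ i < m, s(d (2*i), d (2*i+1)) ∈ M ∧ s(d (2*i), d (2*i+1)) ∉ N) ∧
      (∀ i < m, s(d (2*i+1), d (2*i+2)) ∈ N ∧ s(d (2*i+1), d (2*i+2)) ∉ M) := by
  classical
  set w := wk M N x with hwdef
  have hedges := cycle_edges hM hN hu hu' hx
  have hMedge : ∀ j, Even j → s(w j, w (j+1)) ∈ M := fun j hj => by
    have := hedges j; rwa [if_pos hj] at this
  have hNedge : ∀ j, ¬ Even j → s(w j, w (j+1)) ∈ N := fun j hj => by
    have := hedges j; rwa [if_neg hj] at this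
  have hw1 : w 1 = y₀ := by
    rw [hwdef, wk_succ, if_pos Even.zero, wk_zero]
    exact pt_eq hM.1 hx
  have hex : ∃ L, 0 < L ∧ w L = x := by
    by_contra hcon
    push_neg at hcon
    set C := Fintype.card V with hC
    have hinj := cycle_inj hM hN hedges (2*C+2)
      (fun j hj hjn => hcon j hj)
    have hinjf : Function.Injective (fun i : Fin (2*C+2) => w i.val) := by
      intro a b hab
      exact Fin.ext (hinj a.val (by omega) b.val (by omega) hab)
    have := Fintype.card_le_of_injective _ hinjf
    simp only [Fintype.card_fin] at this
    omega
  obtain ⟨L, hL0, hLx, hmin⟩ : ∃ L, 0 < L ∧ w L = x ∧ ∀ j, 0 < j → j < L → w j ≠ x := by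
    refine ⟨Nat.find hex, (Nat.find_spec hex).1, (Nat.find_spec hex).2, ?_⟩
    intro j hj hjL hjx
    exact absurd ⟨hj, hjx⟩ (Nat.find_min hex hjL)
  have hinj := cycle_inj hM hN hedges (L-1) (fun j hj hjL => hmin j hj (by omega))
  have hLeven : Even L := by
    by_contra hLodd
    rcases Nat.lt_or_ge L 2 with h1 | h1
    · -- L = 1
      have hL1 : L = 1 := by omega
      have : w 1 = x := by rw [← hL1]; exact hLx
      rw [hw1] at this
      rw [this] at hx
      exact edge_ne hM.1.1 hx rfl
    · -- L ≥ 2 odd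
      have hL1ev : Even (L-1) := by
        rcases Nat.even_or_odd L with h | h
        · exact absurd h hLodd
        · obtain ⟨r, hr⟩ := h
          exact ⟨r, by omega⟩
      have e2 : s(w (L-1), w (L-1+1)) ∈ M := hMedge (L-1) hL1ev
      have hL11 : L-1+1 = L := by omega
      rw [hL11, hLx] at e2
      have e2' : s(x, w (L-1)) ∈ M := by rwa [Sym2.eq_swap] at e2
      have huq := matching_unique hM.1 e2' hx
      -- w (L-1) = y₀ = w 1
      have hww : w (L-1) = w 1 := by rw [huq, hw1]
      have h1le : 1 ≤ L - 1 := by omega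
      have hL1' := hinj (L-1) le_rfl 1 h1le hww
      have hL2 : L = 2 := by omega
      exact hLodd (by rw [hL2]; exact ⟨1, rfl⟩)
  obtain ⟨m, hm⟩ : ∃ m, L = 2*m := by
    obtain ⟨r, hr⟩ := hLeven
    exact ⟨r, by omega⟩
  have hm2 : 2 ≤ m := by
    rcases Nat.lt_or_ge m 2 with h | h
    · exfalso
      have hmpos : 0 < m := by omega
      have hm1 : m = 1 := by omega
      have e1 : s(w 1, w 2) ∈ N := hNedge 1 (by simp [Nat.even_add_one])
      have hw2 : w 2 = x := by rw [← show L = 2 by omega]; exact hLx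
      rw [hw2, hw1] at e1
      have e1' : s(x, y₀) ∈ N := by rwa [Sym2.eq_swap] at e1
      exact hxN e1'
    · exact h
  refine ⟨m, hm2, w, wk_zero, by rw [← hm]; exact hLx, fun a ha b hb => hinj a (by omega) b (by omega), ?_, ?_⟩
  · intro i hi
    refine ⟨hMedge (2*i) (even_two_mul' i), ?_⟩
    intro hmem
    cases i with
    | zero =>
      have h0 : w 0 = x := wk_zero
      rw [show 2*0 = 0 from rfl, h0, hw1] at hmem
      exact hxN hmem
    | succ c =>
      have e1 : s(w (2*c+1), w (2*c+2)) ∈ N := hNedge (2*c+1) (odd_two_mul_add_one c)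
      have e1' : s(w (2*c+2), w (2*c+1)) ∈ N := by rwa [Sym2.eq_swap] at e1
      have hmem' : s(w (2*c+2), w (2*c+3)) ∈ N := hmem
      have := hinj (2*c+1) (by omega) (2*c+3) (by omega) (matching_unique hN.1 e1' hmem')
      omega
  · intro i hi
    refine ⟨hNedge (2*i+1) (odd_two_mul_add_one i), ?_⟩
    intro hmem
    have e1 : s(w (2*i), w (2*i+1)) ∈ M := hMedge (2*i) (even_two_mul' i)
    have e1' : s(w (2*i+1), w (2*i)) ∈ M := by rwa [Sym2.eq_swap] at e1
    have heq := matching_unique hM.1 e1' hmem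
    -- w (2*i) = w (2*i+2)
    rcases Nat.lt_or_ge (2*i+2) L with hlt | hge
    · have := hinj (2*i+2) (by omega) (2*i) (by omega) heq.symm
      omega
    · have h2i2 : 2*i+2 = L := by omega
      rw [h2i2, hLx] at heq
      rcases Nat.eq_zero_or_pos (2*i) with h0 | h0
      · omega
      · exact hmin (2*i) h0 (by omega) (by rw [heq])

lemma symm_cancel5 {α : Type*} (a e p q r : Set α) :
    ((((a ∆ e) ∆ p) ∆ q) ∆ r) ∆ e = a ∆ (p ∆ (q ∆ r)) := by
  have h1 : ((((a ∆ e) ∆ p) ∆ q) ∆ r) ∆ e = a ∆ (e ∆ (p ∆ (q ∆ (r ∆ e)))) := by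
    simp only [symmDiff_assoc]
  rw [h1]
  congr 1
  rw [symmDiff_comm r e, ← symmDiff_assoc q, symmDiff_comm q e, symmDiff_assoc e,
    ← symmDiff_assoc p, symmDiff_comm p e, symmDiff_assoc e, ← symmDiff_assoc e,
    symmDiff_self, bot_symmDiff]

lemma samehole_step [Fintype V] {M N F : Set (Sym2 V)} (hM : IsOddMatching G M)
    (hN : IsOddMatching G N) (hF : IsOddMatching G F)
    {u v w₀ : V} (hu : ¬ Covers M u) (hu' : ¬ Covers N u)
    (hvF : ¬ Covers F v) (he : s(v, w₀) ∈ M) (heN : s(v, w₀) ∉ N) :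
    ∃ E : Set (Sym2 V), E ⊆ M ∆ N ∧ E.Nonempty ∧ Reconfig G M (M ∆ E) ∧
      IsOddMatching G (M ∆ E) := by
  classical
  have huv : u ≠ v := fun h => hu (h ▸ ⟨_, he, Sym2.mem_mk_left v w₀⟩)
  obtain ⟨k, hk1, p, hp0, hp2k, hinj, hFed, hMed⟩ :=
    path_between_holes hM hF hu hvF huv
  -- S-predicate : being an endpoint of an edge of M \ N
  set Sp : V → Prop := fun a => ∃ y, s(a, y) ∈ M ∧ s(a, y) ∉ N with hSpdef
  have hexS : ∃ j, j ≤ 2*k ∧ Sp (p j) := ⟨2*k, le_rfl, by rw [hp2k]; exact ⟨w₀, he, heN⟩⟩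
  obtain ⟨j, hjle, hjS, hjmin⟩ : ∃ j, j ≤ 2*k ∧ Sp (p j) ∧ ∀ i < j, ¬ Sp (p i) := by
    have hspec := Nat.find_spec hexS
    refine ⟨Nat.find hexS, hspec.1, hspec.2, ?_⟩
    intro i hi hSi
    exact Nat.find_min hexS hi ⟨by omega, hSi⟩
  have hj0 : j ≠ 0 := by
    intro h
    rw [h, hp0] at hjS
    obtain ⟨y, hy, -⟩ := hjS
    exact hu ⟨_, hy, Sym2.mem_mk_left u y⟩
  have hjodd : ¬ Even j := by
    intro hev
    obtain ⟨c, hc⟩ : ∃ c, j = 2*c + 2 := by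
      obtain ⟨r, hr⟩ := hev
      exact ⟨r - 1, by omega⟩
    obtain ⟨y, hy, hyN⟩ := hjS
    have hMc : s(p (2*c+1), p (2*c+2)) ∈ M := (hMed c (by omega)).1
    have hMc' : s(p (2*c+2), p (2*c+1)) ∈ M := by rwa [Sym2.eq_swap] at hMc
    have hy' : s(p (2*c+2), y) ∈ M := by rw [← hc]; exact hy
    have hpy : p (2*c+1) = y := matching_unique hM.1 hMc' hy'
    apply hjmin (2*c+1) (by omega)
    refine ⟨p (2*c+2), hMc, ?_⟩
    intro hmem
    apply hyN
    rw [hc, ← hpy]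
    rwa [Sym2.eq_swap] at hmem
  obtain ⟨k', hk'⟩ : ∃ k', j = 2*k' + 1 := by
    rcases Nat.even_or_odd j with h | h
    · exact absurd h hjodd
    · obtain ⟨r, hr⟩ := h
      exact ⟨r, by omega⟩
  have hk'k : k' < k := by omega
  -- prefix hole walk
  obtain ⟨hrec1, hodd1, hhole1⟩ := holeWalk k' p M hM (by rwa [hp0]) 
    (fun a ha b hb hab => hinj a (by omega) b (by omega) hab)
    (fun i hi => hF.1.1 (hFed i (by omega)).1)
    (fun i hi => (hMed i (by omega)).1)
  set E₁ := pedges p k' with hE₁def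
  set M₁ := M ∆ E₁ with hM₁def
  -- the cycle through p j
  obtain ⟨yx, hxM, hxN⟩ := hjS
  obtain ⟨m, hm2, d, hd0, hd2m, dinj, hCM, hCN⟩ :=
    cycle_from_edge hM hN hu hu' hxM hxN
  -- prefix vertices are disjoint from cycle vertices
  have hdS : ∀ l ≤ 2*m, Sp (d l) := by
    intro l hl
    rcases Nat.even_or_odd l with hev | hod
    · obtain ⟨i, hi⟩ : ∃ i, l = 2*i := by obtain ⟨r, hr⟩ := hev; exact ⟨r, by omega⟩
      rcases Nat.lt_or_ge i m with him | him
      · exact hi ▸ ⟨d (2*i+1), (hCM i him).1, (hCM i him).2⟩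
      · have : l = 2*m := by omega
        rw [this, hd2m, ← hd0]
        exact ⟨d 1, (hCM 0 (by omega)).1, (hCM 0 (by omega)).2⟩
    · obtain ⟨i, hi⟩ : ∃ i, l = 2*i+1 := by obtain ⟨r, hr⟩ := hod; exact ⟨r, by omega⟩
      have him : i < m := by omega
      refine hi ▸ ⟨d (2*i), ?_, ?_⟩
      · rw [Sym2.eq_swap]; exact (hCM i him).1
      · rw [Sym2.eq_swap]; exact (hCM i him).2
  have hpd : ∀ i' < j, ∀ l ≤ 2*m, p i' ≠ d l := by
    intro i' hi' l hl h
    exact hjmin i' hi' (h ▸ hdS l hl)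
  have hd0x : d 0 = p j := hd0
  -- membership of the first cycle edge in M₁
  have hd01 : s(d 0, d 1) ∈ M₁ := by
    apply Set.mem_symmDiff.mpr
    refine Or.inl ⟨(hCM 0 (by omega)).1, ?_⟩
    rintro (⟨i, hi, hfe⟩ | ⟨i, hi, hfe⟩)
    · rcases Sym2.eq_iff.mp hfe with ⟨h1, -⟩ | ⟨h1, -⟩
      · exact hpd (2*i) (by omega) 0 (by omega) h1.symm
      · exact hpd (2*i+1) (by omega) 0 (by omega) h1.symm
    · rcases Sym2.eq_iff.mp hfe with ⟨h1, -⟩ | ⟨h1, -⟩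
      · exact hpd (2*i+1) (by omega) 0 (by omega) h1.symm
      · exact hpd (2*i+2) (by omega) 0 (by omega) h1.symm
  -- first flip : hole moves from z = p (2k') onto the cycle
  have hGzx : s(p (2*k'), d 0) ∈ G.edgeSet := by
    rw [hd0x, hk']
    exact hF.1.1 (hFed k' hk'k).1
  obtain ⟨hflip2, hodd2, hhole2, heq2⟩ := flip_core hodd1 hhole1 hGzx hd01
  set M₂ := (M₁ \ {s(d 0, d 1)}) ∪ {s(p (2*k'), d 0)} with hM₂def
  -- middle hole walk around the cycle
  have hmidinj : ∀ a ≤ 2*(m-1), ∀ b ≤ 2*(m-1), d (a+1) = d (b+1) → a = b := by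
    intro a ha b hb hab
    have := dinj (a+1) (by omega) (b+1) (by omega) hab
    omega
  obtain ⟨hrec3, hodd3, hhole3⟩ := holeWalk (m-1) (fun i => d (i+1)) M₂ hodd2 hhole2
    hmidinj
    (fun i hi => hN.1.1 (hCN i (by omega)).1)
    (fun i hi => by
      refine Set.mem_union_left _ ⟨Set.mem_symmDiff.mpr (Or.inl ⟨(hCM (i+1) (by omega)).1, ?_⟩), ?_⟩
      · rintro (⟨i', hi', hfe⟩ | ⟨i', hi', hfe⟩)
        · rcases Sym2.eq_iff.mp hfe with ⟨h1, -⟩ | ⟨h1, -⟩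
          · exact hpd (2*i') (by omega) (2*i+2) (by omega) h1.symm
          · exact hpd (2*i'+1) (by omega) (2*i+2) (by omega) h1.symm
        · rcases Sym2.eq_iff.mp hfe with ⟨h1, -⟩ | ⟨h1, -⟩
          · exact hpd (2*i'+1) (by omega) (2*i+2) (by omega) h1.symm
          · exact hpd (2*i'+2) (by omega) (2*i+2) (by omega) h1.symm
      · simp only [Set.mem_singleton_iff]
        intro hfe
        rcases Sym2.eq_iff.mp hfe with ⟨h1, -⟩ | ⟨h1, -⟩
        · have := dinj (2*i+2) (by omega) 0 (by omega) h1
          omega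
        · have := dinj (2*i+2) (by omega) 1 (by omega) h1
          omega)
  set Q := pedges (fun i => d (i+1)) (m-1) with hQdef
  set M₃ := M₂ ∆ Q with hM₃def

  -- second flip : hole returns from the cycle to p (2k')
  have hidx1 : 2*(m-1)+1 = 2*m-1 := by omega
  have hidx2 : 2*(m-1)+2 = 2*m := by omega
  have hhole3' : ¬ Covers M₃ (d (2*m-1)) := by rw [← hidx1]; exact hhole3
  have hG2 : s(d (2*m-1), d (2*m)) ∈ G.edgeSet := by
    have h := (hCN (m-1) (by omega)).1
    rw [hidx1, hidx2] at h
    exact hN.1.1 h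
  have hBB : s(d (2*m), p (2*k')) = s(p (2*k'), d 0) := by
    rw [hd2m, ← hd0]
    exact Sym2.eq_swap
  have hBQ : s(p (2*k'), d 0) ∉ Q := by
    rintro (⟨i, hi, hfe⟩ | ⟨i, hi, hfe⟩) <;>
      rcases Sym2.eq_iff.mp hfe with ⟨h1, h2⟩ | ⟨h1, h2⟩
    · exact hpd (2*k') (by omega) (2*i+1) (by omega) h1
    · exact hpd (2*k') (by omega) (2*i+2) (by omega) h1
    · exact hpd (2*k') (by omega) (2*i+2) (by omega) h1
    · exact hpd (2*k') (by omega) (2*i+3) (by omega) h1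
  have hm2' : s(d (2*m), p (2*k')) ∈ M₃ := by
    rw [hBB]
    exact Set.mem_symmDiff.mpr (Or.inl ⟨Set.mem_union_right _ rfl, hBQ⟩)
  obtain ⟨hflip4, hodd4, hhole4, heq4⟩ := flip_core hodd3 hhole3' hG2 hm2'
  set M₄ := (M₃ \ {s(d (2*m), p (2*k'))}) ∪ {s(d (2*m-1), d (2*m))} with hM₄def
  -- reverse prefix walk : hole returns from p (2k') to u
  obtain ⟨hrec5, hodd5, hhole5⟩ := holeWalk k' (fun i => p (2*k' - i)) M₄ hodd4 hhole4
    (fun a ha b hb hab => by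
      have := hinj (2*k' - a) (by omega) (2*k' - b) (by omega) hab
      omega)
    (fun i hi => by
      show s(p (2*k' - 2*i), p (2*k' - (2*i+1))) ∈ G.edgeSet
      rw [show 2*k' - 2*i = 2*(k'-i-1)+2 from by omega,
        show 2*k' - (2*i+1) = 2*(k'-i-1)+1 from by omega, Sym2.eq_swap]
      exact hM.1.1 (hMed (k'-i-1) (by omega)).1)
    (fun i hi => by
      show s(p (2*k' - (2*i+1)), p (2*k' - (2*i+2))) ∈ M₄
      rw [show 2*k' - (2*i+1) = 2*(k'-i-1)+1 from by omega,
        show 2*k' - (2*i+2) = 2*(k'-i-1) from by omega, Sym2.eq_swap]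
      set c := k'-i-1 with hcdef
      have hcK : c < k' := by omega
      have hFcE : s(p (2*c), p (2*c+1)) ∈ E₁ := Or.inl ⟨c, hcK, rfl⟩
      have hFcM : s(p (2*c), p (2*c+1)) ∉ M := (hFed c (by omega)).2
      have h1 : s(p (2*c), p (2*c+1)) ∈ M₁ := Set.mem_symmDiff.mpr (Or.inr ⟨hFcE, hFcM⟩)
      have h2 : s(p (2*c), p (2*c+1)) ∈ M₂ := by
        refine Set.mem_union_left _ ⟨h1, ?_⟩
        simp only [Set.mem_singleton_iff]
        intro hfe
        rcases Sym2.eq_iff.mp hfe with ⟨hx1, -⟩ | ⟨hx1, -⟩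
        · exact hpd (2*c) (by omega) 0 (by omega) hx1
        · exact hpd (2*c) (by omega) 1 (by omega) hx1
      have h3 : s(p (2*c), p (2*c+1)) ∈ M₃ := by
        refine Set.mem_symmDiff.mpr (Or.inl ⟨h2, ?_⟩)
        rintro (⟨i', hi', hfe⟩ | ⟨i', hi', hfe⟩) <;>
          rcases Sym2.eq_iff.mp hfe with ⟨hx1, hx2⟩ | ⟨hx1, hx2⟩
        · exact hpd (2*c) (by omega) (2*i'+1) (by omega) hx1
        · exact hpd (2*c) (by omega) (2*i'+2) (by omega) hx1
        · exact hpd (2*c) (by omega) (2*i'+2) (by omega) hx1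
        · exact hpd (2*c) (by omega) (2*i'+3) (by omega) hx1
      refine Set.mem_union_left _ ⟨h3, ?_⟩
      simp only [Set.mem_singleton_iff]
      intro hfe
      rcases Sym2.eq_iff.mp hfe with ⟨hx1, -⟩ | ⟨-, hx2⟩
      · exact hpd (2*c) (by omega) (2*m) (by omega) hx1
      · exact hpd (2*c+1) (by omega) (2*m) (by omega) hx2)
  have hrev : pedges (fun i => p (2*k' - i)) k' = E₁ := by
    rw [hE₁def]
    ext f
    constructor
    · rintro (⟨i, hi, rfl⟩ | ⟨i, hi, rfl⟩)
      · refine Or.inr ⟨k'-i-1, by omega, ?_⟩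
        show s(p (2*k' - 2*i), p (2*k' - (2*i+1))) = _
        rw [show 2*k' - 2*i = 2*(k'-i-1)+2 from by omega,
          show 2*k' - (2*i+1) = 2*(k'-i-1)+1 from by omega]
        exact Sym2.eq_swap
      · refine Or.inl ⟨k'-i-1, by omega, ?_⟩
        show s(p (2*k' - (2*i+1)), p (2*k' - (2*i+2))) = _
        rw [show 2*k' - (2*i+1) = 2*(k'-i-1)+1 from by omega,
          show 2*k' - (2*i+2) = 2*(k'-i-1) from by omega]
        exact Sym2.eq_swap
    · rintro (⟨i, hi, rfl⟩ | ⟨i, hi, rfl⟩)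
      · refine Or.inr ⟨k'-i-1, by omega, ?_⟩
        show _ = s(p (2*k' - (2*(k'-i-1)+1)), p (2*k' - (2*(k'-i-1)+2)))
        rw [show 2*k' - (2*(k'-i-1)+1) = 2*i+1 from by omega,
          show 2*k' - (2*(k'-i-1)+2) = 2*i from by omega]
        exact Sym2.eq_swap
      · refine Or.inl ⟨k'-i-1, by omega, ?_⟩
        show _ = s(p (2*k' - 2*(k'-i-1)), p (2*k' - (2*(k'-i-1)+1)))
        rw [show 2*k' - 2*(k'-i-1) = 2*i+2 from by omega,
          show 2*k' - (2*(k'-i-1)+1) = 2*i+1 from by omega]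
        exact Sym2.eq_swap
  -- assemble the final matching
  set A := s(d 0, d 1) with hAdef
  set B := s(p (2*k'), d 0) with hBdef
  set C := s(d (2*m-1), d (2*m)) with hCdef
  set E := ({A} ∪ Q ∪ {C} : Set (Sym2 V)) with hEdef
  have hC0 : d (2*m) = d 0 := by rw [hd2m, hd0]
  have hAB : A ≠ B := by
    intro hfe
    rcases Sym2.eq_iff.mp hfe with ⟨hx1, -⟩ | ⟨-, hx2⟩
    · exact hpd (2*k') (by omega) 0 (by omega) hx1.symm
    · exact hpd (2*k') (by omega) 1 (by omega) hx2.symm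
  have hAC : A ≠ C := by
    intro hfe
    rcases Sym2.eq_iff.mp hfe with ⟨hx1, -⟩ | ⟨-, hx2⟩
    · have := dinj 0 (by omega) (2*m-1) (by omega) hx1
      omega
    · have := dinj 1 (by omega) (2*m-1) (by omega) hx2
      omega
  have hBC : B ≠ C := by
    intro hfe
    rcases Sym2.eq_iff.mp hfe with ⟨hx1, -⟩ | ⟨hx1, -⟩
    · exact hpd (2*k') (by omega) (2*m-1) (by omega) hx1
    · exact hpd (2*k') (by omega) (2*m) (by omega) hx1
  have hAQ : A ∉ Q := by
    rintro (⟨i, hi, hfe⟩ | ⟨i, hi, hfe⟩) <;>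
      rcases Sym2.eq_iff.mp hfe with ⟨hx1, hx2⟩ | ⟨hx1, hx2⟩
    · have := dinj 0 (by omega) (2*i+1) (by omega) hx1
      omega
    · have := dinj 0 (by omega) (2*i+2) (by omega) hx1
      omega
    · have := dinj 0 (by omega) (2*i+2) (by omega) hx1
      omega
    · have := dinj 0 (by omega) (2*i+3) (by omega) hx1
      omega
  have hCQ : C ∉ Q := by
    rintro (⟨i, hi, hfe⟩ | ⟨i, hi, hfe⟩) <;>
      rcases Sym2.eq_iff.mp hfe with ⟨hx1, hx2⟩ | ⟨hx1, hx2⟩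
    · have := dinj (2*m-1) (by omega) (2*i+1) (by omega) hx1
      omega
    · have := dinj (2*m-1) (by omega) (2*i+2) (by omega) hx1
      omega
    · have := dinj (2*m-1) (by omega) (2*i+2) (by omega) hx1
      omega
    · rw [hC0] at hx2
      have := dinj 0 (by omega) (2*i+2) (by omega) hx2
      omega
  have heq4' : M₄ = M₃ ∆ {B, C} := by
    rw [heq4, hBB]
  have hXE : ({A, B} : Set (Sym2 V)) ∆ (Q ∆ {B, C}) = E := by
    ext f
    simp only [hEdef, Set.mem_symmDiff, Set.mem_insert_iff, Set.mem_singleton_iff,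
      Set.mem_union]
    constructor
    · rintro (⟨hf1, hf2⟩ | ⟨hf1, hf2⟩)
      · rcases hf1 with rfl | rfl
        · exact Or.inl (Or.inl rfl)
        · exfalso
          exact hf2 (Or.inr ⟨Or.inl rfl, hBQ⟩)
      · rcases hf1 with ⟨hfQ, hfne⟩ | ⟨hf, hfQ⟩
        · exact Or.inl (Or.inr hfQ)
        · rcases hf with rfl | rfl
          · exact absurd (Or.inr rfl) hf2
          · exact Or.inr rfl
    · rintro ((rfl | hfQ) | rfl)
      · exact Or.inl ⟨Or.inl rfl, by
          rintro (⟨h1, -⟩ | ⟨h | h, -⟩)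
          · exact hAQ h1
          · exact hAB h
          · exact hAC h⟩
      · refine Or.inr ⟨Or.inl ⟨hfQ, ?_⟩, ?_⟩
        · rintro (rfl | rfl)
          · exact hBQ hfQ
          · exact hCQ hfQ
        · rintro (rfl | rfl)
          · exact hAQ hfQ
          · exact hBQ hfQ
      · refine Or.inr ⟨Or.inr ⟨Or.inr rfl, fun h => hCQ h⟩, ?_⟩
        rintro (h | h)
        · exact hAC h.symm
        · exact hBC h.symm
  have hM₅ : M₄ ∆ pedges (fun i => p (2*k' - i)) k' = M ∆ E := by
    rw [hrev, heq4', hM₃def, heq2, hM₁def, symm_cancel5, hXE]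
  refine ⟨E, ?_, ⟨A, Or.inl (Or.inl rfl)⟩, ?_, ?_⟩
  · rintro f ((rfl | hfQ) | rfl)
    · exact Set.mem_symmDiff.mpr (Or.inl ⟨(hCM 0 (by omega)).1, (hCM 0 (by omega)).2⟩)
    · rcases hfQ with ⟨i, hi, rfl⟩ | ⟨i, hi, rfl⟩
      · exact Set.mem_symmDiff.mpr (Or.inr ⟨(hCN i (by omega)).1, (hCN i (by omega)).2⟩)
      · exact Set.mem_symmDiff.mpr (Or.inl ⟨(hCM (i+1) (by omega)).1, (hCM (i+1) (by omega)).2⟩)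
    · have h := hCN (m-1) (by omega)
      rw [hidx1, hidx2] at h
      exact Set.mem_symmDiff.mpr (Or.inr ⟨h.1, h.2⟩)
  · rw [← hM₅]
    exact hrec1.trans ((Relation.ReflTransGen.single hflip2).trans
      (hrec3.trans ((Relation.ReflTransGen.single hflip4).trans hrec5)))
  · rw [← hM₅]
    exact hodd5

lemma find_flip {e : Sym2 V} {X Y : Set (Sym2 V)} (h : Reconfig G X Y) :
    e ∈ X → e ∉ Y → ∃ A B, Flip G A B ∧ e ∈ A ∧ e ∉ B := by
  induction h with
  | refl => exact fun h1 h2 => absurd h1 h2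
  | @tail b c _ hbc ih =>
    intro h1 h2
    by_cases hb : e ∈ b
    · exact ⟨b, c, hbc, hb, h2⟩
    · exact ih h1 hb

lemma forward [Fintype V] (hrec : Reconfigurable G) :
    ∀ u v : V, G.Adj u v →
      (((∀ M : Set (Sym2 V), IsOddMatching G M → s(u, v) ∈ M) ∨
        (∀ M : Set (Sym2 V), IsOddMatching G M → s(u, v) ∉ M)) ∨
       (HasPerfectMatchingAvoiding G {u} ∨ HasPerfectMatchingAvoiding G {v})) := by
  classical
  intro u v hadj
  by_cases hall : ∀ M : Set (Sym2 V), IsOddMatching G M → s(u, v) ∈ M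
  · exact Or.inl (Or.inl hall)
  by_cases hnone : ∀ M : Set (Sym2 V), IsOddMatching G M → s(u, v) ∉ M
  · exact Or.inl (Or.inr hnone)
  push_neg at hall hnone
  obtain ⟨M₁, hM₁, he1⟩ := hall
  obtain ⟨M₂, hM₂, he2⟩ := hnone
  obtain ⟨X, Y, hflip, heX, heY⟩ := find_flip (hrec M₂ M₁ hM₂ hM₁) he2 he1
  obtain ⟨hX, a, b, c, ha, hG, hbc, rfl⟩ := hflip
  have huvbc : s(u, v) = s(b, c) := by
    by_contra hne
    exact heY (Set.mem_union_left _ ⟨heX, hne⟩)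
  obtain ⟨-, hoddY, hholeY, -⟩ := flip_core hX ha hG hbc
  right
  rcases Sym2.eq_iff.mp huvbc with ⟨h1, h2⟩ | ⟨h1, h2⟩
  · exact Or.inr (avoiding_iff_hole.mpr ⟨_, hoddY, by rw [h2]; exact hholeY⟩)
  · exact Or.inl (avoiding_iff_hole.mpr ⟨_, hoddY, by rw [h1]; exact hholeY⟩)

lemma backward [Fintype V]
    (hcond : ∀ u v : V, G.Adj u v →
        (((∀ M : Set (Sym2 V), IsOddMatching G M → s(u, v) ∈ M) ∨
          (∀ M : Set (Sym2 V), IsOddMatching G M → s(u, v) ∉ M)) ∨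
         (HasPerfectMatchingAvoiding G {u} ∨ HasPerfectMatchingAvoiding G {v}))) :
    Reconfigurable G := by
  classical
  have main : ∀ n (M N : Set (Sym2 V)), IsOddMatching G M → IsOddMatching G N →
      (M ∆ N).ncard ≤ n → Reconfig G M N := by
    intro n
    induction n with
    | zero =>
      intro M N hM hN hcard
      have hemp : (M ∆ N) = ∅ := by
        have := Set.ncard_eq_zero (s := M ∆ N) (Set.toFinite _)
        rw [← this]
        omega
      have : M = N := by simpa using symmDiff_eq_bot.mp hemp
      rw [this]
      exact Relation.ReflTransGen.refl
    | succ n ih =>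
      intro M N hM hN hcard
      by_cases hMN : M = N
      · rw [hMN]
        exact Relation.ReflTransGen.refl
      have step : ∀ (M' N' : Set (Sym2 V)), IsOddMatching G M' → IsOddMatching G N' →
          ∀ u, ¬ Covers M' u → ¬ Covers N' u → ∀ e, e ∈ M' → e ∉ N' →
          (M' ∆ N').ncard ≤ n+1 → Reconfig G M' N' := by
        intro M' N' hM' hN' u hu hu' e heM heN hcard'
        induction e using Sym2.ind with
        | _ v w₀ =>
        have hadj : G.Adj v w₀ := G.mem_edgeSet.mp (hM'.1.1 heM)
        rcases hcond v w₀ hadj with (hall | hnone) | (hv | hw)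
        · exact absurd (hall N' hN') heN
        · exact absurd heM (hnone M' hM')
        · obtain ⟨F, hF, hvF⟩ := avoiding_iff_hole.mp hv
          obtain ⟨E, hEsub, hEne, hrec, hodd⟩ := samehole_step hM' hN' hF hu hu' hvF heM heN
          refine hrec.trans (ih (M' ∆ E) N' hodd hN' ?_)
          have h1 : (M' ∆ E) ∆ N' = (M' ∆ N') \ E := by
            rw [symmDiff_assoc, symmDiff_comm E N', ← symmDiff_assoc, symmDiff_of_ge hEsub]
          have h2 : (M' ∆ N') \ E ⊂ M' ∆ N' := by
            rw [Set.ssubset_iff_of_subset Set.diff_subset]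
            obtain ⟨f, hf⟩ := hEne
            exact ⟨f, hEsub hf, fun hd => hd.2 hf⟩
          have h3 := Set.ncard_lt_ncard h2 (Set.toFinite _)
          rw [h1]
          omega
        · rw [Sym2.eq_swap] at heM heN
          obtain ⟨F, hF, hwF⟩ := avoiding_iff_hole.mp hw
          obtain ⟨E, hEsub, hEne, hrec, hodd⟩ := samehole_step hM' hN' hF hu hu' hwF heM heN
          refine hrec.trans (ih (M' ∆ E) N' hodd hN' ?_)
          have h1 : (M' ∆ E) ∆ N' = (M' ∆ N') \ E := by
            rw [symmDiff_assoc, symmDiff_comm E N', ← symmDiff_assoc, symmDiff_of_ge hEsub]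
          have h2 : (M' ∆ N') \ E ⊂ M' ∆ N' := by
            rw [Set.ssubset_iff_of_subset Set.diff_subset]
            obtain ⟨f, hf⟩ := hEne
            exact ⟨f, hEsub hf, fun hd => hd.2 hf⟩
          have h3 := Set.ncard_lt_ncard h2 (Set.toFinite _)
          rw [h1]
          omega
      obtain ⟨u, huM, huuniq⟩ := hM.2
      obtain ⟨u', hu'N, hu'uniq⟩ := hN.2
      by_cases huu : u = u'
      · subst huu
        have hne : (M ∆ N).Nonempty := by
          rw [Set.nonempty_iff_ne_empty]
          intro h
          exact hMN (by simpa using symmDiff_eq_bot.mp h)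
        obtain ⟨e, he⟩ := hne
        rcases Set.mem_symmDiff.mp he with ⟨heM, heN⟩ | ⟨heN, heM⟩
        · exact step M N hM hN u huM hu'N e heM heN hcard
        · refine reconfig_symm (step N M hN hM u hu'N huM e heN heM ?_)
          rwa [symmDiff_comm]
      · obtain ⟨k, hk1, p, hp0, hp2k, hinjp, hNed, hMed⟩ :=
          path_between_holes hM hN huM hu'N huu
        obtain ⟨hrec1, hodd1, hhole1⟩ := holeWalk k p M hM (by rwa [hp0]) hinjp
          (fun i hi => hN.1.1 (hNed i hi).1) (fun i hi => (hMed i hi).1)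
        refine hrec1.trans (ih (M ∆ pedges p k) N hodd1 hN ?_)
        have hsub : pedges p k ⊆ M ∆ N := by
          rintro f (⟨i, hi, rfl⟩ | ⟨i, hi, rfl⟩)
          · exact Set.mem_symmDiff.mpr (Or.inr ⟨(hNed i hi).1, (hNed i hi).2⟩)
          · exact Set.mem_symmDiff.mpr (Or.inl ⟨(hMed i hi).1, (hMed i hi).2⟩)
        have h1 : (M ∆ pedges p k) ∆ N = (M ∆ N) \ pedges p k := by
          rw [symmDiff_assoc, symmDiff_comm (pedges p k) N, ← symmDiff_assoc,
            symmDiff_of_ge hsub]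
        have h2 : (M ∆ N) \ pedges p k ⊂ M ∆ N := by
          rw [Set.ssubset_iff_of_subset Set.diff_subset]
          have hf : s(p 1, p 2) ∈ pedges p k := Or.inr ⟨0, by omega, rfl⟩
          exact ⟨s(p 1, p 2), hsub hf, fun hd => hd.2 hf⟩
        have h3 := Set.ncard_lt_ncard h2 (Set.toFinite _)
        rw [h1]
        omega
  intro M N hM hN
  exact main ((M ∆ N).ncard) M N hM hN le_rfl

end OMach

/-- A finite simple graph with an odd number of vertices is reconfigurable if and only if
for every edge `e = uv`, either `e` lies in all or in no odd matchings of `G`,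
or at least one of `G - u`, `G - v` has a perfect matching. -/
theorem stmt0 {V : Type*} [Fintype V] (G : SimpleGraph V)
    (hodd : Odd (Fintype.card V)) :
    Reconfigurable G ↔
      ∀ u v : V, G.Adj u v →
        (((∀ M : Set (Sym2 V), IsOddMatching G M → s(u, v) ∈ M) ∨
          (∀ M : Set (Sym2 V), IsOddMatching G M → s(u, v) ∉ M)) ∨
         (HasPerfectMatchingAvoiding G {u} ∨ HasPerfectMatchingAvoiding G {v})) :=
  ⟨OMach.forward, OMach.backward⟩
end

section
/- Let G be a finite simple graph with an odd number of vertices and let e be an edge of G that is not contained in any odd matching of G. Then G is reconfigurable if and only if the graph G − e obtained by deleting the edge e is reconfigurable. -/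
/-!
A flip always produces an odd matching, and by hypothesis no odd matching of `G` uses `e`.
Hence `G` and `G - e` have the same odd matchings and the same flips, so the two
reconfiguration relations coincide.
-/

section

variable {V : Type*} {G H : SimpleGraph V} {M N : Set (Sym2 V)}

lemma covers_insert_iff {e : Sym2 V} {x : V} : Covers (insert e M) x ↔ x ∈ e ∨ Covers M x := by
  simp [Covers]

lemma IsMatchingOn.mono (hHG : H ≤ G) (hM : IsMatchingOn H M) : IsMatchingOn G M :=
  ⟨hM.1.trans (SimpleGraph.edgeSet_mono hHG), hM.2⟩

lemma IsMatchingOn.subset (hM : IsMatchingOn G M) (hNM : N ⊆ M) : IsMatchingOn G N :=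
  ⟨hNM.trans hM.1, fun e he f hf => hM.2 e (hNM he) f (hNM hf)⟩

lemma IsMatchingOn.insert {e : Sym2 V} (hM : IsMatchingOn G M) (he : e ∈ G.edgeSet)
    (hdisj : ∀ f ∈ M, ∀ x ∈ e, x ∉ f) : IsMatchingOn G (insert e M) := by
  refine ⟨Set.insert_subset he hM.1, ?_⟩
  rintro f₁ (rfl | hf₁) f₂ (rfl | hf₂) hne x hx
  · exact absurd rfl hne
  · exact hdisj f₂ hf₂ x hx
  · exact fun hx' => hdisj f₁ hf₁ x hx' hx
  · exact hM.2 f₁ hf₁ f₂ hf₂ hne x hx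

lemma IsOddMatching.mono (hHG : H ≤ G) (hM : IsOddMatching H M) : IsOddMatching G M :=
  ⟨hM.1.mono hHG, hM.2⟩

lemma IsOddMatching.covers_of_ne {a x : V} (hM : IsOddMatching G M) (ha : ¬ Covers M a)
    (hxa : x ≠ a) : Covers M x := by
  obtain ⟨-, y, -, huniq⟩ := hM
  by_contra hx
  exact hxa ((huniq x hx).trans (huniq a ha).symm)

/-- The new isolated vertex is `w`, the partner of `v` in `M`. -/
theorem Flip.isOddMatching_right (h : Flip G M N) : IsOddMatching G N := by
  obtain ⟨hM, a, b, c, ha, hab, hbc, rfl⟩ := h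
  have hbc' : b ≠ c := G.ne_of_adj (hM.1.1 hbc)
  have hac : a ≠ c := by
    rintro rfl
    exact ha ⟨_, hbc, Sym2.mem_mk_right _ _⟩
  have hother : ∀ f ∈ M, f ≠ s(b, c) → b ∉ f ∧ c ∉ f := fun f hf hne =>
    ⟨hM.1.2 _ hbc f hf hne.symm b (Sym2.mem_mk_left _ _),
      hM.1.2 _ hbc f hf hne.symm c (Sym2.mem_mk_right _ _)⟩
  rw [Set.union_singleton]
  refine ⟨(hM.1.subset Set.sdiff_subset).insert hab ?_, c, ?_, ?_⟩
  · rintro f ⟨hf, hne⟩ x hx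
    rcases Sym2.mem_iff.1 hx with rfl | rfl
    · exact fun hxf => ha ⟨f, hf, hxf⟩
    · exact (hother f hf hne).1
  · intro hc
    rcases covers_insert_iff.1 hc with hc | ⟨f, ⟨hf, hne⟩, hcf⟩
    · rcases Sym2.mem_iff.1 hc with h | h
      exacts [hac h.symm, hbc' h.symm]
    · exact (hother f hf hne).2 hcf
  · intro x hx
    by_contra hxc
    obtain ⟨hxab, hxN⟩ := not_or.1 (covers_insert_iff.not.1 hx)
    obtain ⟨f, hf, hxf⟩ := hM.covers_of_ne ha fun h => hxab (h ▸ Sym2.mem_mk_left _ _)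
    have hne : f ≠ s(b, c) := by
      rintro rfl
      rcases Sym2.mem_iff.1 hxf with rfl | rfl
      exacts [hxab (Sym2.mem_mk_right _ _), hxc rfl]
    exact hxN ⟨f, ⟨hf, hne⟩, hxf⟩

lemma Flip.mono (hHG : H ≤ G) (h : Flip H M N) : Flip G M N := by
  obtain ⟨hM, a, b, c, ha, hab, hbc, rfl⟩ := h
  exact ⟨hM.mono hHG, a, b, c, ha, SimpleGraph.edgeSet_mono hHG hab, hbc, rfl⟩

section Subgraph

variable (hHG : H ≤ G) (hGH : ∀ M, IsOddMatching G M → M ⊆ H.edgeSet)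
include hHG hGH

lemma isOddMatching_iff_of_le : IsOddMatching H M ↔ IsOddMatching G M :=
  ⟨(·.mono hHG), fun hM => ⟨⟨hGH M hM, hM.1.2⟩, hM.2⟩⟩

lemma flip_iff_of_le : Flip H M N ↔ Flip G M N := by
  refine ⟨Flip.mono hHG, fun h => ?_⟩
  have hN := h.isOddMatching_right
  obtain ⟨hM, a, b, c, ha, -, hbc, rfl⟩ := h
  exact ⟨(isOddMatching_iff_of_le hHG hGH).2 hM, a, b, c, ha, hGH _ hN (by simp), hbc, rfl⟩

lemma reconfigurable_iff_of_le : Reconfigurable H ↔ Reconfigurable G := by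
  have hflip : Flip H = Flip G := by
    ext M N
    exact flip_iff_of_le hHG hGH
  simp only [Reconfigurable, Reconfig, hflip, isOddMatching_iff_of_le hHG hGH]

end Subgraph

lemma IsOddMatching.subset_edgeSet_deleteEdges {u v : V}
    (he : ∀ M, IsOddMatching G M → s(u, v) ∉ M) (hM : IsOddMatching G M) :
    M ⊆ (G.deleteEdges {s(u, v)}).edgeSet := by
  rw [SimpleGraph.edgeSet_deleteEdges]
  exact fun e heM => ⟨hM.1.1 heM, fun heuv => he M hM (Set.mem_singleton_iff.1 heuv ▸ heM)⟩

end

theorem stmt2_general {V : Type*} (G : SimpleGraph V)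
    (u v : V)
    (he : ∀ M : Set (Sym2 V), IsOddMatching G M → s(u, v) ∉ M) :
    Reconfigurable G ↔ Reconfigurable (G.deleteEdges {s(u, v)}) :=
  (reconfigurable_iff_of_le (G.deleteEdges_le _) fun _ hM => hM.subset_edgeSet_deleteEdges he).symm

/-- If the edge `e = uv` of `G` (a finite simple graph of odd order) is contained in
no odd matching of `G`, then `G` is reconfigurable iff `G - e` is reconfigurable. -/
theorem stmt2 {V : Type*} [Fintype V] (G : SimpleGraph V)
    (hodd : Odd (Fintype.card V)) (u v : V) (huv : G.Adj u v)
    (he : ∀ M : Set (Sym2 V), IsOddMatching G M → s(u, v) ∉ M) :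
    Reconfigurable G ↔ Reconfigurable (G.deleteEdges {s(u, v)}) :=
  stmt2_general G u v he
end

section
/- Let M and M' be odd matchings of a finite simple graph G such that M can be reconfigured to M', and let v_M be the isolated vertex of M. Then for every cycle C of G all of whose edges belong to the symmetric difference M △ M', there exists a vertex v on C such that G contains an M-alternating path connecting v and v_M. -/
/-!
A flip that adds `uv` and removes `vw` turns the odd matching `M` with isolated vertex `u` into
an odd matching `N` with isolated vertex `w`. A vertex joined to `w` by an `N`-alternating path is
joined to `u` by an `M`-alternating path: the path either avoids `v` and is extended by `w v u`,
or passes through `v` along its `N`-edge `uv`, and is then cut at `u` or rerouted through `vw`.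
Induction along the flip sequence then joins every endpoint of an edge of `M △ M'`, in particular
every vertex of the cycle, to the isolated vertex of `M` by an `M`-alternating path.
-/

lemma IsMatchingOn.eq_of_mem {V : Type*} {G : SimpleGraph V} {M : Set (Sym2 V)} (hM : IsMatchingOn G M)
    {e f : Sym2 V} {x : V} (he : e ∈ M) (hf : f ∈ M) (hxe : x ∈ e) (hxf : x ∈ f) : e = f := by
  by_contra hne
  exact hM.2 e he f hf hne x hxe hxf

namespace SimpleGraph

variable {V : Type*} {G : SimpleGraph V} {M N : Set (Sym2 V)} {a b c d : V}

namespace Walk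

def IsAlternating (M : Set (Sym2 V)) (p : G.Walk a b) : Prop :=
  p.edges.IsChain fun e f => e ∈ M ↔ f ∉ M

lemma mem_of_mem_head?_edges {p : G.Walk a b} {e : Sym2 V} (he : e ∈ p.edges.head?) : a ∈ e := by
  cases p with
  | nil => simp at he
  | cons h q =>
    obtain rfl : s(a, _) = e := by simpa using he
    exact Sym2.mem_mk_left _ _

lemma mem_of_mem_getLast?_edges {p : G.Walk a b} {e : Sym2 V} (he : e ∈ p.edges.getLast?) :
    b ∈ e := by
  obtain ⟨hne, rfl⟩ := List.mem_getLast?_eq_getLast he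
  simp

lemma isPath_append_cons {p : G.Walk a b} {q : G.Walk c d} (h : G.Adj b c) :
    (p.append (cons h q)).IsPath ↔ p.IsPath ∧ q.IsPath ∧ p.support.Disjoint q.support := by
  simp only [isPath_def, support_append, support_cons, List.tail_cons, List.nodup_append']

@[simp]
lemma isAlternating_nil : (nil : G.Walk a a).IsAlternating M := List.IsChain.nil

@[simp]
lemma isAlternating_cons_nil (h : G.Adj a b) : (cons h nil).IsAlternating M :=
  List.IsChain.singleton _

lemma IsAlternating.reverse {p : G.Walk a b} (hp : p.IsAlternating M) :
    p.reverse.IsAlternating M := by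
  unfold IsAlternating
  rw [edges_reverse, List.isChain_reverse]
  exact hp.imp fun e f h => by tauto

lemma IsAlternating.of_append_left {p : G.Walk a b} {q : G.Walk b c}
    (h : (p.append q).IsAlternating M) : p.IsAlternating M := by
  unfold IsAlternating at h
  rw [edges_append, List.isChain_append] at h
  exact h.1

lemma IsAlternating.of_append_right {p : G.Walk a b} {q : G.Walk b c}
    (h : (p.append q).IsAlternating M) : q.IsAlternating M := by
  unfold IsAlternating at h
  rw [edges_append, List.isChain_append] at h
  exact h.2.1

lemma isAlternating_congr {p : G.Walk a b} (h : ∀ e ∈ p.edges, e ∈ M ↔ e ∈ N) :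
    p.IsAlternating M ↔ p.IsAlternating N :=
  List.IsChain.iff_of_mem_imp fun e f he hf => by rw [h e he, h f hf]

lemma IsAlternating.exists_mem_edges {p : G.Walk a b} (hp : p.IsAlternating M) {c : V}
    (hc : c ∈ p.support) (hca : c ≠ a) (hcb : c ≠ b) : ∃ e ∈ p.edges, c ∈ e ∧ e ∈ M := by
  induction p with
  | nil => exact absurd (by simpa using hc) hca
  | @cons a y b h q ih =>
    obtain rfl | hc := List.mem_cons.1 (support_cons h q ▸ hc)
    · exact absurd rfl hca
    by_cases hcy : c = y
    · subst hcy
      cases q with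
      | nil => exact absurd rfl hcb
      | cons h' q' =>
        have hrel := (List.isChain_cons_cons.1 hp).1
        by_cases hac : s(a, c) ∈ M
        · exact ⟨s(a, c), by simp, by simp, hac⟩
        · exact ⟨_, by simp, by simp, not_not.1 (mt hrel.2 hac)⟩
    · obtain ⟨e, he, hce, heM⟩ := ih (List.isChain_cons.1 hp).2 hc hcy hcb
      exact ⟨e, List.mem_cons_of_mem _ he, hce, heM⟩

lemma IsAlternating.append_cons (hM : IsMatchingOn G M) {p : G.Walk a b} {q : G.Walk c d}
    (h : G.Adj b c) (hbc : s(b, c) ∈ M) (hp : p.IsAlternating M) (hq : q.IsAlternating M)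
    (hbp : s(b, c) ∉ p.edges) (hcq : s(b, c) ∉ q.edges) :
    (p.append (cons h q)).IsAlternating M := by
  have not_mem : ∀ {e : Sym2 V} {x : V}, x ∈ s(b, c) → x ∈ e → e ≠ s(b, c) → e ∉ M :=
    fun hx hxe hne heM => hne (hM.eq_of_mem heM hbc hxe hx)
  unfold IsAlternating
  rw [edges_append, edges_cons, List.isChain_append, List.isChain_cons]
  refine ⟨hp, ⟨fun f hf => iff_of_true hbc ?_, hq⟩, fun e he f hf => ?_⟩
  · exact not_mem (Sym2.mem_mk_right b c) (mem_of_mem_head?_edges hf)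
      (ne_of_mem_of_not_mem (List.mem_of_mem_head? hf) hcq)
  · obtain rfl : f = s(b, c) := by simpa using hf.symm
    exact iff_of_false (not_mem (Sym2.mem_mk_left b c) (mem_of_mem_getLast?_edges he)
      (ne_of_mem_of_not_mem (List.mem_of_mem_getLast? he) hbp)) (not_not_intro hbc)

end Walk

open Walk

def AlternatingReachable (G : SimpleGraph V) (M : Set (Sym2 V)) (x y : V) : Prop :=
  ∃ p : G.Walk x y, p.IsPath ∧ p.IsAlternating M

section Flip

variable {u v w : V}

lemma mem_flip_iff {e : Sym2 V} (huv : e ≠ s(u, v)) (hvw : e ≠ s(v, w)) :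
    e ∈ M \ {s(v, w)} ∪ {s(u, v)} ↔ e ∈ M := by
  simp [huv, hvw]

lemma Walk.isAlternating_flip_iff {p : G.Walk a b} (huv : s(u, v) ∉ p.edges)
    (hvw : s(v, w) ∉ p.edges) :
    p.IsAlternating (M \ {s(v, w)} ∪ {s(u, v)}) ↔ p.IsAlternating M :=
  isAlternating_congr fun _ he =>
    mem_flip_iff (ne_of_mem_of_not_mem he huv) (ne_of_mem_of_not_mem he hvw)

lemma Walk.isAlternating_flip_iff_of_notMem_support {p : G.Walk a b} (hv : v ∉ p.support) :
    p.IsAlternating (M \ {s(v, w)} ∪ {s(u, v)}) ↔ p.IsAlternating M :=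
  isAlternating_flip_iff (fun h => hv (p.snd_mem_support_of_mem_edges h))
    (fun h => hv (p.fst_mem_support_of_mem_edges h))

lemma eq_of_mem_flip (hM : IsMatchingOn G M) (hu : ¬ Covers M u) (hvw : s(v, w) ∈ M)
    {e : Sym2 V} (he : e ∈ M \ {s(v, w)} ∪ {s(u, v)}) (h : u ∈ e ∨ v ∈ e) : e = s(u, v) := by
  rcases he with ⟨heM, hne⟩ | rfl
  · rcases h with hue | hve
    · exact absurd ⟨e, heM, hue⟩ hu
    · exact absurd (hM.eq_of_mem heM hvw hve (Sym2.mem_mk_left v w)) hne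
  · rfl

lemma not_covers_flip (hM : IsMatchingOn G M) (hu : ¬ Covers M u) (hvw : s(v, w) ∈ M) :
    ¬ Covers (M \ {s(v, w)} ∪ {s(u, v)}) w := by
  rintro ⟨e, ⟨heM, hne⟩ | rfl, hwe⟩
  · exact hne (hM.eq_of_mem heM hvw hwe (Sym2.mem_mk_right v w))
  · rcases Sym2.mem_iff.1 hwe with rfl | rfl
    · exact hu ⟨_, hvw, Sym2.mem_mk_right _ _⟩
    · exact (hM.1 hvw).ne rfl

lemma alternatingReachable_of_flip_of_notMem_support (hM : IsMatchingOn G M)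
    (hu : ¬ Covers M u) (huv : G.Adj u v) (hvw : s(v, w) ∈ M) {x : V} (hxu : x ≠ u)
    (p : G.Walk x w) (hp : p.IsPath) (hpN : p.IsAlternating (M \ {s(v, w)} ∪ {s(u, v)}))
    (hv : v ∉ p.support) : G.AlternatingReachable M x u := by
  have hwv : G.Adj w v := (hM.1 hvw).symm
  have hwu : w ≠ u := fun h => hu ⟨_, hvw, h ▸ Sym2.mem_mk_right v w⟩
  have hup : u ∉ p.support := by
    intro hup
    obtain ⟨e, he, hue, heN⟩ := hpN.exists_mem_edges hup hxu.symm hwu.symm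
    rw [eq_of_mem_flip hM hu hvw heN (Or.inl hue)] at he
    exact hv (p.snd_mem_support_of_mem_edges he)
  have hpM : p.IsAlternating M := (isAlternating_flip_iff_of_notMem_support hv).1 hpN
  refine ⟨p.append (cons hwv (cons huv.symm nil)), ?_, ?_⟩
  · exact (isPath_append_cons hwv).2 ⟨hp, by simp [huv.ne.symm], by simp [hv, hup]⟩
  · refine hpM.append_cons hM hwv (Sym2.eq_swap ▸ hvw) (isAlternating_cons_nil _)
      (fun h => hv (p.snd_mem_support_of_mem_edges h)) ?_
    simp [hwu, hwv.ne]

lemma alternatingReachable_of_flip_of_mem_support (hM : IsMatchingOn G M)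
    (hu : ¬ Covers M u) (huv : G.Adj u v) (hvw : s(v, w) ∈ M) {x : V} (hxv : x ≠ v)
    (p : G.Walk x w) (hp : p.IsPath) (hpN : p.IsAlternating (M \ {s(v, w)} ∪ {s(u, v)}))
    (hv : v ∈ p.support) : G.AlternatingReachable M x u := by
  have hvw' : G.Adj v w := hM.1 hvw
  obtain ⟨e, he, hve, heN⟩ := hpN.exists_mem_edges hv hxv.symm hvw'.ne
  rw [eq_of_mem_flip hM hu hvw heN (Or.inr hve)] at he
  obtain ⟨q, r, hq, hr, rfl⟩ := hp.mem_support_iff_exists_append.1 hv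
  rcases List.mem_append.1 (edges_append q r ▸ he) with huvq | huvr
  · obtain ⟨q₁, q₂, hq₁, -, rfl⟩ :=
      hq.mem_support_iff_exists_append.1 (q.fst_mem_support_of_mem_edges huvq)
    have hvq₁ : v ∉ q₁.support := fun h =>
      hq.ne_of_mem_support_of_append huv.ne.symm h q₂.end_mem_support rfl
    exact ⟨q₁, hq₁,
      (isAlternating_flip_iff_of_notMem_support hvq₁).1 hpN.of_append_left.of_append_left⟩
  · obtain ⟨r₁, r₂, -, hr₂, rfl⟩ :=
      hr.mem_support_iff_exists_append.1 (r.fst_mem_support_of_mem_edges huvr)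
    have hvr₂ : v ∉ r₂.support := fun h =>
      hr.ne_of_mem_support_of_append huv.ne.symm r₁.start_mem_support h rfl
    have hqr₂ : q.support.Disjoint r₂.support := fun y hyq hyr₂ => by
      obtain rfl : y = v := by
        by_contra hyv
        exact hp.ne_of_mem_support_of_append hyv hyq
          ((mem_support_append_iff _ _).2 (Or.inr hyr₂)) rfl
      exact hvr₂ hyr₂
    have hqM : q.IsAlternating M := (isAlternating_flip_iff
      (fun h => hqr₂ (q.fst_mem_support_of_mem_edges h) r₂.start_mem_support)
      (fun h => hqr₂ (q.snd_mem_support_of_mem_edges h) r₂.end_mem_support)).1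
      hpN.of_append_left
    have hr₂M : r₂.IsAlternating M :=
      (isAlternating_flip_iff_of_notMem_support hvr₂).1 hpN.of_append_right.of_append_right
    refine ⟨q.append (cons hvw' r₂.reverse), ?_, ?_⟩
    · exact (isPath_append_cons hvw').2
        ⟨hq, hr₂.reverse, by rwa [support_reverse, List.disjoint_reverse_right]⟩
    · refine hqM.append_cons hM hvw' hvw hr₂M.reverse
        (fun h => hqr₂ (q.snd_mem_support_of_mem_edges h) r₂.end_mem_support) ?_
      rw [edges_reverse, List.mem_reverse]
      exact fun h => hvr₂ (r₂.fst_mem_support_of_mem_edges h)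

lemma alternatingReachable_of_flip (hM : IsMatchingOn G M) (hu : ¬ Covers M u)
    (huv : G.Adj u v) (hvw : s(v, w) ∈ M) {x : V}
    (hx : x = u ∨ x = v ∨ x = w ∨ G.AlternatingReachable (M \ {s(v, w)} ∪ {s(u, v)}) x w) :
    G.AlternatingReachable M x u := by
  by_cases hxu : x = u
  · subst hxu
    exact ⟨nil, by simp, isAlternating_nil⟩
  by_cases hxv : x = v
  · subst hxv
    exact ⟨cons huv.symm nil, by simp [hxu], isAlternating_cons_nil _⟩
  obtain ⟨p, hp, hpN⟩ : G.AlternatingReachable (M \ {s(v, w)} ∪ {s(u, v)}) x w := by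
    rcases hx with h | h | rfl | h
    exacts [absurd h hxu, absurd h hxv, ⟨nil, by simp, isAlternating_nil⟩, h]
  by_cases hv : v ∈ p.support
  · exact alternatingReachable_of_flip_of_mem_support hM hu huv hvw hxv p hp hpN hv
  · exact alternatingReachable_of_flip_of_notMem_support hM hu huv hvw hxu p hp hpN hv

end Flip

end SimpleGraph

theorem Reconfig.alternatingReachable {V : Type*} {G : SimpleGraph V} {M M' : Set (Sym2 V)}
    (hrec : Reconfig G M M') {u : V} (hu : ¬ Covers M u) {e : Sym2 V}
    (he : e ∈ symmDiff M M') {x : V} (hx : x ∈ e) : G.AlternatingReachable M x u := by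
  induction hrec using Relation.ReflTransGen.head_induction_on generalizing u with
  | refl => simp at he
  | head hflip _ ih =>
    obtain ⟨hA, u', v, w, hu', huv, hvw, rfl⟩ := hflip
    obtain rfl : u' = u := hA.2.unique hu' hu
    refine SimpleGraph.alternatingReachable_of_flip hA.1 hu huv hvw ?_
    by_cases he' : e = s(u', v) ∨ e = s(v, w)
    · rcases he' with rfl | rfl <;> rcases Sym2.mem_iff.1 hx with rfl | rfl <;> simp
    · obtain ⟨heuv, hevw⟩ := not_or.1 he'
      refine Or.inr (Or.inr (Or.inr (ih (SimpleGraph.not_covers_flip hA.1 hu hvw) ?_)))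
      rw [Set.mem_symmDiff, SimpleGraph.mem_flip_iff heuv hevw]
      exact he

theorem stmt4_general {V : Type*} (G : SimpleGraph V) (M M' : Set (Sym2 V))
    (vM : V) (hvM : ¬ Covers M vM)
    (hrec : Reconfig G M M')
    (a : V) (C : G.Walk a a) (hC : C.IsCycle)
    (hCe : ∀ e ∈ C.edges, e ∈ symmDiff M M') :
    ∃ v ∈ C.support, ∃ p : G.Walk v vM, p.IsPath ∧
      List.Chain' (fun e f => (e ∈ M ↔ f ∉ M)) p.edges := by
  have hedge := C.mk_start_snd_mem_edges hC.not_nil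
  obtain ⟨p, hp, halt⟩ :=
    hrec.alternatingReachable hvM (hCe _ hedge) (Sym2.mem_mk_left a C.snd)
  exact ⟨a, C.start_mem_support, p, hp, halt⟩

/-- If the odd matching `M` (with isolated vertex `vM`) can be reconfigured to `M'`,
then for every cycle of `G` all of whose edges lie in `M △ M'` there is a vertex `v`
on the cycle admitting an `M`-alternating path from `v` to `vM`. -/
theorem stmt4 {V : Type*} [Fintype V] (G : SimpleGraph V) (M M' : Set (Sym2 V))
    (hM : IsOddMatching G M) (hM' : IsOddMatching G M')
    (vM : V) (hvM : ¬ Covers M vM)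
    (hrec : Reconfig G M M')
    (a : V) (C : G.Walk a a) (hC : C.IsCycle)
    (hCe : ∀ e ∈ C.edges, e ∈ symmDiff M M') :
    ∃ v ∈ C.support, ∃ p : G.Walk v vM, p.IsPath ∧
      List.Chain' (fun e f => (e ∈ M ↔ f ∉ M)) p.edges :=
  stmt4_general G M M' vM hvM hrec a C hC hCe
end

section
/- Every finite factor-critical graph (on at least one vertex) is reconfigurable; that is, if G is a finite simple graph such that G − v has a perfect matching for every vertex v of G, then any odd matching of G can be reconfigured into any other odd matching of G. -/
namespace Stmt5
open Classical

variable {V : Type*}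

lemma sym2_rep (e : Sym2 V) : ∃ a b, e = s(a,b) := by
  induction e using Sym2.ind with
  | _ x y => exact ⟨x, y, rfl⟩

lemma edge_ne {G : SimpleGraph V} {x y : V} (h : s(x,y) ∈ G.edgeSet) : x ≠ y :=
  ((SimpleGraph.mem_edgeSet G).mp h).ne

lemma matching_eq {G : SimpleGraph V} {M : Set (Sym2 V)} (hM : IsMatchingOn G M)
    {e f : Sym2 V} (he : e ∈ M) (hf : f ∈ M) {v : V} (hve : v ∈ e) (hvf : v ∈ f) : e = f := by
  by_contra h
  exact hM.2 e he f hf h v hve hvf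

lemma covers_iff {M : Set (Sym2 V)} {x : V} : Covers M x ↔ ∃ y, s(x,y) ∈ M := by
  constructor
  · rintro ⟨e, he, hx⟩
    obtain ⟨y, rfl⟩ := Sym2.mem_iff_exists.mp hx
    exact ⟨y, he⟩
  · rintro ⟨y, hy⟩
    exact ⟨s(x,y), hy, Sym2.mem_mk_left x y⟩

/-- every vertex other than the isolated one is covered -/
lemma covers_of_ne {G : SimpleGraph V} {M : Set (Sym2 V)} {u : V}
    (hM : IsOddMatching G M) (hu : ¬ Covers M u) {x : V} (hx : x ≠ u) : Covers M x := by
  obtain ⟨z, hz, hzu⟩ := hM.2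
  by_contra hc
  exact hx ((hzu x hc).trans (hzu u hu).symm)

noncomputable def pt (A : Set (Sym2 V)) (x : V) : V :=
  if h : ∃ y, s(x,y) ∈ A then h.choose else x

lemma pt_spec {A : Set (Sym2 V)} {x : V} (h : ∃ y, s(x,y) ∈ A) : s(x, pt A x) ∈ A := by
  rw [pt, dif_pos h]
  exact h.choose_spec

lemma pt_eq {G : SimpleGraph V} {A : Set (Sym2 V)} (hA : IsMatchingOn G A) {x y : V}
    (h : s(x,y) ∈ A) : pt A x = y := by
  have h1 : s(x, pt A x) ∈ A := pt_spec ⟨y, h⟩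
  have h2 := matching_eq hA h1 h (Sym2.mem_mk_left _ _) (Sym2.mem_mk_left _ _)
  rw [Sym2.eq_iff] at h2
  rcases h2 with ⟨-, h2⟩ | ⟨h2, h3⟩
  · exact h2
  · rw [h3, h2]

lemma sym2_eq_index {p : ℕ → V} {K : ℕ} (hinj : Set.InjOn p (Set.Iic K))
    {a b c d : ℕ} (ha : a ≤ K) (hb : b ≤ K) (hc : c ≤ K) (hd : d ≤ K)
    (h : s(p a, p b) = s(p c, p d)) : (a = c ∧ b = d) ∨ (a = d ∧ b = c) := by
  rw [Sym2.eq_iff] at h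
  rcases h with ⟨h1, h2⟩ | ⟨h1, h2⟩
  · exact Or.inl ⟨hinj (Set.mem_Iic.mpr ha) (Set.mem_Iic.mpr hc) h1,
      hinj (Set.mem_Iic.mpr hb) (Set.mem_Iic.mpr hd) h2⟩
  · exact Or.inr ⟨hinj (Set.mem_Iic.mpr ha) (Set.mem_Iic.mpr hd) h1,
      hinj (Set.mem_Iic.mpr hb) (Set.mem_Iic.mpr hc) h2⟩

lemma injOn_Iic_succ {p : ℕ → V} {n : ℕ} (h : Set.InjOn p (Set.Iic n))
    (h2 : ∀ i ≤ n, p (n+1) ≠ p i) : Set.InjOn p (Set.Iic (n+1)) := by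
  intro x hx y hy hxy
  rw [Set.mem_Iic] at hx hy
  rcases Nat.lt_succ_iff_lt_or_eq.mp (Nat.lt_succ_of_le hx) with hx' | rfl
  · rcases Nat.lt_succ_iff_lt_or_eq.mp (Nat.lt_succ_of_le hy) with hy' | rfl
    · exact h (Set.mem_Iic.mpr (Nat.lt_succ_iff.mp hx')) (Set.mem_Iic.mpr (Nat.lt_succ_iff.mp hy')) hxy
    · exact absurd hxy.symm (h2 x (Nat.lt_succ_iff.mp hx'))
  · rcases Nat.lt_succ_iff_lt_or_eq.mp (Nat.lt_succ_of_le hy) with hy' | rfl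
    · exact absurd hxy (h2 y (Nat.lt_succ_iff.mp hy'))
    · rfl

lemma flip_step {G : SimpleGraph V} {M : Set (Sym2 V)} {u v w : V}
    (hM : IsOddMatching G M) (hu : ¬ Covers M u)
    (huv : s(u,v) ∈ G.edgeSet) (hvw : s(v,w) ∈ M) :
    Flip G M ((M \ {s(v,w)}) ∪ {s(u,v)}) ∧
      IsOddMatching G ((M \ {s(v,w)}) ∪ {s(u,v)}) ∧
      ¬ Covers ((M \ {s(v,w)}) ∪ {s(u,v)}) w := by
  obtain ⟨hMm, hEU⟩ := hM
  have hvwE : s(v,w) ∈ G.edgeSet := hMm.1 hvw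
  have hvw' : v ≠ w := edge_ne hvwE
  have huv' : u ≠ v := edge_ne huv
  have hucov : ∀ e ∈ M, u ∉ e := fun e he hue => hu ⟨e, he, hue⟩
  have huw : u ≠ w := by
    intro h
    exact hucov _ hvw (by rw [h]; exact Sym2.mem_mk_right v w)
  have hmatch : IsMatchingOn G ((M \ {s(v,w)}) ∪ {s(u,v)}) := by
    constructor
    · rintro e (⟨he, -⟩ | he)
      · exact hMm.1 he
      · rw [Set.mem_singleton_iff] at he; rw [he]; exact huv
    · rintro e he f hf hef x hxe hxf
      rcases he with ⟨he, hne⟩ | he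
      · rcases hf with ⟨hf, hnf⟩ | hf
        · exact hMm.2 e he f hf hef x hxe hxf
        · rw [Set.mem_singleton_iff] at hf
          rw [hf, Sym2.mem_iff] at hxf
          rcases hxf with h' | h'
          · exact hucov e he (h' ▸ hxe)
          · exact hne (by rw [Set.mem_singleton_iff,
              ← matching_eq hMm he hvw (h' ▸ hxe) (Sym2.mem_mk_left v w)])
      · rcases hf with ⟨hf, hnf⟩ | hf
        · rw [Set.mem_singleton_iff] at he
          rw [he, Sym2.mem_iff] at hxe
          rcases hxe with h' | h'
          · exact hucov f hf (h' ▸ hxf)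
          · exact hnf (by rw [Set.mem_singleton_iff,
              ← matching_eq hMm hf hvw (h' ▸ hxf) (Sym2.mem_mk_left v w)])
        · rw [Set.mem_singleton_iff] at he hf
          exact hef (he.trans hf.symm)
  have hwuncov : ¬ Covers ((M \ {s(v,w)}) ∪ {s(u,v)}) w := by
    rintro ⟨e, he, hwe⟩
    rcases he with ⟨he, hne⟩ | he
    · exact hne (by rw [Set.mem_singleton_iff,
        matching_eq hMm he hvw hwe (Sym2.mem_mk_right v w)])
    · rw [Set.mem_singleton_iff] at he
      rw [he, Sym2.mem_iff] at hwe
      rcases hwe with rfl | rfl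
      · exact huw rfl
      · exact hvw' rfl
  have hcov : ∀ x, x ≠ w → Covers ((M \ {s(v,w)}) ∪ {s(u,v)}) x := by
    intro x hxw
    by_cases hxu : x = u
    · exact ⟨s(u,v), Or.inr rfl, by rw [hxu]; exact Sym2.mem_mk_left u v⟩
    by_cases hxv : x = v
    · exact ⟨s(u,v), Or.inr rfl, by rw [hxv]; exact Sym2.mem_mk_right u v⟩
    obtain ⟨e, he, hxe⟩ := covers_of_ne ⟨hMm, hEU⟩ hu hxu
    refine ⟨e, Or.inl ⟨he, ?_⟩, hxe⟩
    intro hevw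
    rw [Set.mem_singleton_iff] at hevw
    rw [hevw, Sym2.mem_iff] at hxe
    rcases hxe with rfl | rfl
    · exact hxv rfl
    · exact hxw rfl
  refine ⟨⟨⟨hMm, hEU⟩, u, v, w, hu, huv, hvw, rfl⟩,
    ⟨hmatch, w, hwuncov, fun y hy => ?_⟩, hwuncov⟩
  by_contra hyw
  exact hy (hcov y hyw)

end Stmt5

namespace Stmt5
set_option maxHeartbeats 1000000
open Classical

variable {V : Type*}

lemma step_set_eq (M : Set (Sym2 V)) (p : ℕ → V) (k : ℕ)
    (hfact : ∀ j < k, s(p (2*k+1), p (2*k+2)) ≠ s(p (2*j), p (2*j+1))) :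
    (((((M \ {e | ∃ j < k, e = s(p (2*j+1), p (2*j+2))}) ∪
      {e | ∃ j < k, e = s(p (2*j), p (2*j+1))})) \ {s(p (2*k+1), p (2*k+2))}) ∪ {s(p (2*k), p (2*k+1))}) =
        ((M \ {e | ∃ j < k+1, e = s(p (2*j+1), p (2*j+2))}) ∪
          {e | ∃ j < k+1, e = s(p (2*j), p (2*j+1))}) := by
  ext e
  have hRsplit : (∃ j < k+1, e = s(p (2*j+1), p (2*j+2))) ↔
      ((∃ j < k, e = s(p (2*j+1), p (2*j+2))) ∨ e = s(p (2*k+1), p (2*k+2))) := by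
    constructor
    · rintro ⟨j, hj, rfl⟩
      rcases Nat.lt_succ_iff_lt_or_eq.mp hj with h | rfl
      · exact Or.inl ⟨j, h, rfl⟩
      · exact Or.inr rfl
    · rintro (⟨j, hj, rfl⟩ | rfl)
      · exact ⟨j, by omega, rfl⟩
      · exact ⟨k, by omega, rfl⟩
  have hAsplit : (∃ j < k+1, e = s(p (2*j), p (2*j+1))) ↔
      ((∃ j < k, e = s(p (2*j), p (2*j+1))) ∨ e = s(p (2*k), p (2*k+1))) := by
    constructor
    · rintro ⟨j, hj, rfl⟩
      rcases Nat.lt_succ_iff_lt_or_eq.mp hj with h | rfl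
      · exact Or.inl ⟨j, h, rfl⟩
      · exact Or.inr rfl
    · rintro (⟨j, hj, rfl⟩ | rfl)
      · exact ⟨j, by omega, rfl⟩
      · exact ⟨k, by omega, rfl⟩
  have hfact' : (∃ j < k, e = s(p (2*j), p (2*j+1))) → e ≠ s(p (2*k+1), p (2*k+2)) := by
    rintro ⟨j, hj, rfl⟩ h
    exact hfact j hj h.symm
  simp only [Set.mem_union, Set.mem_diff, Set.mem_singleton_iff, Set.mem_setOf_eq]
  rw [hRsplit, hAsplit]
  constructor
  · rintro (⟨⟨h1, h2⟩ | h1, h3⟩ | h1)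
    · exact Or.inl ⟨h1, fun h => h.elim h2 h3⟩
    · exact Or.inr (Or.inl h1)
    · exact Or.inr (Or.inr h1)
  · rintro (⟨h1, h2⟩ | h1 | h1)
    · exact Or.inl ⟨Or.inl ⟨h1, fun h => h2 (Or.inl h)⟩, fun h => h2 (Or.inr h)⟩
    · exact Or.inl ⟨Or.inr h1, hfact' h1⟩
    · exact Or.inr h1

/-- flipping along an alternating path -/
lemma transport {G : SimpleGraph V} {M : Set (Sym2 V)} (p : ℕ → V)
    (hM : IsOddMatching G M) (h0 : ¬ Covers M (p 0)) :
    ∀ k : ℕ, Set.InjOn p (Set.Iic (2*k)) →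
    (∀ i < k, s(p (2*i), p (2*i+1)) ∈ G.edgeSet) →
    (∀ i < k, s(p (2*i+1), p (2*i+2)) ∈ M) →
    Reconfig G M ((M \ {e | ∃ j < k, e = s(p (2*j+1), p (2*j+2))}) ∪
      {e | ∃ j < k, e = s(p (2*j), p (2*j+1))}) ∧
    IsOddMatching G ((M \ {e | ∃ j < k, e = s(p (2*j+1), p (2*j+2))}) ∪
      {e | ∃ j < k, e = s(p (2*j), p (2*j+1))}) ∧
    ¬ Covers ((M \ {e | ∃ j < k, e = s(p (2*j+1), p (2*j+2))}) ∪
      {e | ∃ j < k, e = s(p (2*j), p (2*j+1))}) (p (2*k)) := by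
  intro k
  induction k with
  | zero =>
    intro _ _ _
    have h : ((M \ {e | ∃ j < 0, e = s(p (2*j+1), p (2*j+2))}) ∪
        {e | ∃ j < 0, e = s(p (2*j), p (2*j+1))}) = M := by
      ext e; simp
    rw [h]
    exact ⟨Relation.ReflTransGen.refl, hM, h0⟩
  | succ k ih =>
    intro hinj hG hMe
    have hsub : Set.Iic (2*k) ⊆ Set.Iic (2*(k+1)) := Set.Iic_subset_Iic.mpr (by omega)
    obtain ⟨hrec, hodd, hiso⟩ := ih (hinj.mono hsub) (fun i hi => hG i (by omega))
      (fun i hi => hMe i (by omega))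
    have hle : ∀ m, m ≤ 2*k+2 → m ≤ 2*(k+1) := by omega
    have hne1 : ∀ j < k, s(p (2*k+1), p (2*k+2)) ≠ s(p (2*j+1), p (2*j+2)) := by
      intro j hj h
      rcases sym2_eq_index hinj (by omega) (by omega) (by omega) (by omega) h with ⟨h1, h2⟩ | ⟨h1, h2⟩ <;> omega
    have hne2 : ∀ j < k, s(p (2*k+1), p (2*k+2)) ≠ s(p (2*j), p (2*j+1)) := by
      intro j hj h
      rcases sym2_eq_index hinj (by omega) (by omega) (by omega) (by omega) h with ⟨h1, h2⟩ | ⟨h1, h2⟩ <;> omega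
    have hmem : s(p (2*k+1), p (2*k+2)) ∈ ((M \ {e | ∃ j < k, e = s(p (2*j+1), p (2*j+2))}) ∪
      {e | ∃ j < k, e = s(p (2*j), p (2*j+1))}) := by
      refine Or.inl ⟨hMe k (by omega), ?_⟩
      rintro ⟨j, hj, hj2⟩
      exact hne1 j hj hj2
    have hedge : s(p (2*k), p (2*k+1)) ∈ G.edgeSet := hG k (by omega)
    obtain ⟨hflip, hodd', hiso'⟩ := flip_step hodd hiso hedge hmem
    have hset := step_set_eq M p k hne2
    rw [← hset]
    have h2k2 : 2*(k+1) = 2*k+2 := by ring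
    rw [h2k2]
    exact ⟨hrec.tail hflip, hodd', hiso'⟩

end Stmt5

namespace Stmt5
open Classical

variable {V : Type*}

noncomputable def walk (A B : Set (Sym2 V)) (a : V) : ℕ → V
  | 0 => a
  | n+1 => if Even n then pt A (walk A B a n) else pt B (walk A B a n)

@[simp] lemma walk_zero {A B : Set (Sym2 V)} {a : V} : walk A B a 0 = a := rfl

lemma walk_succ {A B : Set (Sym2 V)} {a : V} (n : ℕ) :
    walk A B a (n+1) = if Even n then pt A (walk A B a n) else pt B (walk A B a n) := rfl

/-- first-repeat analysis for alternating walks -/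
lemma walk_norepeat {G : SimpleGraph V} {A B : Set (Sym2 V)}
    (hA : IsMatchingOn G A) (hB : IsMatchingOn G B)
    (p : ℕ → V) (n : ℕ)
    (halt : ∀ m ≤ n, s(p m, p (m+1)) ∈ (if Even m then A \ B else B \ A))
    (hinj : Set.InjOn p (Set.Iic n))
    {i : ℕ} (hi : i ≤ n) (hrep : p (n+1) = p i) :
    i = 0 ∧ ¬ Even n ∧ s(p n, p (n+1)) ∈ B \ A := by
  have hGe : ∀ m ≤ n, s(p m, p (m+1)) ∈ G.edgeSet := by
    intro m hm
    have h := halt m hm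
    split_ifs at h with hpar
    · exact hA.1 h.1
    · exact hB.1 h.1
  have hne : ∀ m ≤ n, p m ≠ p (m+1) := fun m hm => edge_ne (hGe m hm)
  have hilt : i < n := by
    rcases Nat.lt_or_ge i n with h | h
    · exact h
    · exfalso
      have : i = n := le_antisymm hi h
      exact hne n le_rfl (by rw [this] at hrep; exact hrep.symm)
  have hpin : p i ∈ s(p n, p (n+1)) := by
    rw [hrep] at *
    exact Sym2.mem_mk_right _ _
  -- helper for deriving contradictions
  have hinj' : ∀ a b : ℕ, a ≤ n → b ≤ n → p a = p b → a = b := fun a b ha hb h =>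
    hinj (Set.mem_Iic.mpr ha) (Set.mem_Iic.mpr hb) h
  by_cases hn : Even n
  · exfalso
    have he : s(p n, p (n+1)) ∈ A \ B := by
      have h := halt n le_rfl; rwa [if_pos hn] at h
    rcases Nat.even_or_odd i with hie | hio
    · -- f := edge at i, in A \ B
      have hfi : s(p i, p (i+1)) ∈ A \ B := by
        have h := halt i (le_of_lt hilt); rwa [if_pos hie] at h
      have heq : s(p n, p (n+1)) = s(p i, p (i+1)) :=
        matching_eq hA he.1 hfi.1 hpin (Sym2.mem_mk_left _ _)
      rw [Sym2.eq_iff] at heq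
      rcases heq with ⟨h1, h2⟩ | ⟨h1, h2⟩
      · exact absurd (hinj' n i le_rfl (le_of_lt hilt) h1) (by omega)
      · by_cases hc : i + 1 = n
        · -- parity contradiction
          rw [← hc] at hn
          exact (Nat.even_add_one.mp hn) hie
        · have := hinj' n (i+1) le_rfl (by omega) h1
          omega
    · have hipos : 0 < i := hio.pos
      obtain ⟨i', rfl⟩ : ∃ i', i = i' + 1 := ⟨i - 1, by omega⟩
      have hie' : Even i' := by
        rcases Nat.even_or_odd i' with h | h
        · exact h
        · exact absurd (by simpa using h.add_one) (by simpa using hio)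
      have hfi : s(p i', p (i'+1)) ∈ A \ B := by
        have h := halt i' (by omega); rwa [if_pos hie'] at h
      have heq : s(p n, p (n+1)) = s(p i', p (i'+1)) :=
        matching_eq hA he.1 hfi.1 hpin (Sym2.mem_mk_right _ _)
      rw [Sym2.eq_iff] at heq
      rcases heq with ⟨h1, h2⟩ | ⟨h1, h2⟩
      · have := hinj' n i' le_rfl (by omega) h1
        omega
      · have := hinj' n (i'+1) le_rfl (by omega) h1
        omega
  · -- n odd
    have he : s(p n, p (n+1)) ∈ B \ A := by
      have h := halt n le_rfl; rwa [if_neg hn] at h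
    rcases Nat.eq_zero_or_pos i with rfl | hipos
    · exact ⟨rfl, hn, he⟩
    exfalso
    rcases Nat.even_or_odd i with hie | hio
    · -- i even, i ≥ 1, so i = i'+1 with i' odd
      obtain ⟨i', rfl⟩ : ∃ i', i = i' + 1 := ⟨i - 1, by omega⟩
      have hio' : ¬ Even i' := by
        intro h
        exact (Nat.even_add_one.mp hie) (by simpa using h)
      have hfi : s(p i', p (i'+1)) ∈ B \ A := by
        have h := halt i' (by omega); rwa [if_neg hio'] at h
      have heq : s(p n, p (n+1)) = s(p i', p (i'+1)) :=
        matching_eq hB he.1 hfi.1 hpin (Sym2.mem_mk_right _ _)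
      rw [Sym2.eq_iff] at heq
      rcases heq with ⟨h1, h2⟩ | ⟨h1, h2⟩
      · have := hinj' n i' le_rfl (by omega) h1
        omega
      · have := hinj' n (i'+1) le_rfl (by omega) h1
        omega
    · have hio' : ¬ Even i := Nat.not_even_iff_odd.mpr hio
      have hfi : s(p i, p (i+1)) ∈ B \ A := by
        have h := halt i (le_of_lt hilt); rwa [if_neg hio'] at h
      have heq : s(p n, p (n+1)) = s(p i, p (i+1)) :=
        matching_eq hB he.1 hfi.1 hpin (Sym2.mem_mk_left _ _)
      rw [Sym2.eq_iff] at heq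
      rcases heq with ⟨h1, h2⟩ | ⟨h1, h2⟩
      · exact absurd (hinj' n i le_rfl (le_of_lt hilt) h1) (by omega)
      · by_cases hc : i + 1 = n
        · rw [← hc] at hn
          exact hn (by simpa using hio.add_one)
        · have := hinj' n (i+1) le_rfl (by omega) h1
          omega

end Stmt5

namespace Stmt5
open Classical

variable {V : Type*}

/-- extract an alternating cycle from the symmetric difference of two odd matchings
with the same isolated vertex -/
lemma cycle_extract {G : SimpleGraph V} [Fintype V] {M M' : Set (Sym2 V)} {u a b : V}
    (hM : IsOddMatching G M) (hM' : IsOddMatching G M')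
    (hu : ¬ Covers M u) (hu' : ¬ Covers M' u)
    (hab : s(a,b) ∈ M \ M') :
    ∃ (s : ℕ) (q : ℕ → V), 1 ≤ s ∧ q (2*s) = q 0 ∧ Set.InjOn q (Set.Iio (2*s)) ∧
      (∀ n < 2*s, s(q n, q (n+1)) ∈ (if Even n then M \ M' else M' \ M)) := by
  set q := walk M M' a with hq
  -- global alternation
  have halt : ∀ n, s(q n, q (n+1)) ∈ (if Even n then M \ M' else M' \ M) := by
    intro n
    induction n with
    | zero =>
      rw [if_pos (by simp)]
      have h1 : q 1 = b := by
        rw [hq, walk_succ 0, if_pos (by simp), walk_zero]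
        exact pt_eq hM.1 hab.1
      rw [h1]
      exact hab
    | succ n ih =>
      -- the vertex q (n+1) is covered by one of the matchings, hence ≠ u
      have hzu : q (n+1) ≠ u := by
        intro h
        split_ifs at ih with hpar
        · exact hu ⟨_, ih.1, by rw [← h]; exact Sym2.mem_mk_right _ _⟩
        · exact hu' ⟨_, ih.1, by rw [← h]; exact Sym2.mem_mk_right _ _⟩
      by_cases hpar : Even (n+1)
      · rw [if_pos hpar]
        have hprev : s(q n, q (n+1)) ∈ M' \ M := by
          have h := ih; rwa [if_neg (by simpa using Nat.even_add_one.mp hpar)] at h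
        have hcov : ∃ y, s(q (n+1), y) ∈ M := covers_iff.mp (covers_of_ne hM hu hzu)
        have hstep : q (n+2) = pt M (q (n+1)) := by
          rw [hq, walk_succ (n+1), if_pos hpar]
        rw [hstep]
        refine ⟨pt_spec hcov, fun hmem => ?_⟩
        have heq := matching_eq hM'.1 hmem hprev.1 (Sym2.mem_mk_left _ _) (Sym2.mem_mk_right _ _)
        exact hprev.2 (heq ▸ pt_spec hcov)
      · rw [if_neg hpar]
        have hevn : Even n := by
          rcases Nat.even_or_odd n with h' | h'
          · exact h'
          · exact absurd (by simpa using h'.add_one) hpar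
        have hprev : s(q n, q (n+1)) ∈ M \ M' := by
          have h := ih
          rwa [if_pos hevn] at h
        have hcov : ∃ y, s(q (n+1), y) ∈ M' := covers_iff.mp (covers_of_ne hM' hu' hzu)
        have hstep : q (n+2) = pt M' (q (n+1)) := by
          rw [hq, walk_succ (n+1), if_neg hpar]
        rw [hstep]
        refine ⟨pt_spec hcov, fun hmem => ?_⟩
        have heq := matching_eq hM.1 hmem hprev.1 (Sym2.mem_mk_left _ _) (Sym2.mem_mk_right _ _)
        exact hprev.2 (heq ▸ pt_spec hcov)
  -- a repeat exists
  have hrep : ∃ m, ∃ i < m, q m = q i := by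
    obtain ⟨x, y, hxy, hpxy⟩ := Fintype.exists_ne_map_eq_of_card_lt
      (fun i : Fin (Fintype.card V + 1) => q i) (by simp)
    rcases Nat.lt_or_ge (x : ℕ) (y : ℕ) with h | h
    · exact ⟨y, x, h, hpxy.symm⟩
    · have : (y : ℕ) < (x : ℕ) := by
        rcases Nat.lt_or_ge (y : ℕ) (x : ℕ) with h' | h'
        · exact h'
        · exact absurd (Fin.ext (le_antisymm h h')).symm hxy
      exact ⟨x, y, this, hpxy⟩
  classical
  set n₀ := Nat.find hrep with hn₀
  obtain ⟨i, hilt, hirep⟩ := Nat.find_spec hrep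
  have hmin := fun m (hm : m < n₀) => Nat.find_min hrep hm
  have hn₀pos : 1 ≤ n₀ := by omega
  have hinj : Set.InjOn q (Set.Iic (n₀ - 1)) := by
    intro x hx y hy hxy
    rw [Set.mem_Iic] at hx hy
    by_contra hne
    rcases Nat.lt_or_ge x y with h | h
    · exact hmin y (by omega) ⟨x, h, hxy.symm⟩
    · have : y < x := by omega
      exact hmin x (by omega) ⟨y, this, hxy⟩
  have hn1 : n₀ - 1 + 1 = n₀ := by omega
  obtain ⟨hi0, hodd, hclose⟩ := walk_norepeat hM.1 hM'.1 q (n₀ - 1)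
    (fun m _ => halt m) hinj (i := i) (by omega) (by rw [hn1]; exact hirep)
  have hmod : (n₀ - 1) % 2 = 1 := Nat.odd_iff.mp (Nat.not_even_iff_odd.mp hodd)
  obtain ⟨s, hs⟩ : ∃ s, n₀ = 2 * s := ⟨n₀ / 2, by omega⟩
  exact ⟨s, q, by omega, by rw [← hs, hirep, hi0], by
      intro x hx y hy hxy
      exact hinj (Set.mem_Iic.mpr (by rw [Set.mem_Iio] at hx; omega))
        (Set.mem_Iic.mpr (by rw [Set.mem_Iio] at hy; omega)) hxy,
    fun n _ => halt n⟩

end Stmt5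

namespace Stmt5
open Classical

variable {V : Type*}

/-- from the isolated vertex, an alternating path (w.r.t. a perfect matching of G - a)
reaches the cycle vertex set Q -/
lemma reach_cycle {G : SimpleGraph V} [Fintype V] {M N : Set (Sym2 V)} {u a : V}
    (hM : IsOddMatching G M) (hu : ¬ Covers M u)
    (hN : IsMatchingOn G N) (hNcov : ∀ x, x ≠ a → Covers N x)
    (Q : Set V) (hQa : a ∈ Q) (hQu : u ∉ Q)
    (hQM : ∀ z ∈ Q, ∀ y, s(z, y) ∈ M → y ∈ Q)
    (hua : u ≠ a) :
    ∃ (t : ℕ) (p : ℕ → V), p 0 = u ∧ Set.InjOn p (Set.Iic (2*t+2)) ∧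
      (∀ m ≤ 2*t, s(p m, p (m+1)) ∈ (if Even m then N \ M else M \ N)) ∧
      s(p (2*t+1), p (2*t+2)) ∈ M ∧
      p (2*t+1) ∈ Q ∧ p (2*t+2) ∈ Q ∧
      (∀ m, 1 ≤ m → m ≤ 2*t → p m ∉ Q) := by
  set p := walk N M u with hp
  have hp0 : p 0 = u := rfl
  -- single alternation step
  have step : ∀ n, (∀ m < n, s(p m, p (m+1)) ∈ (if Even m then N \ M else M \ N)) →
      Set.InjOn p (Set.Iic n) → (Even n → p n ≠ a) →
      s(p n, p (n+1)) ∈ (if Even n then N \ M else M \ N) := by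
    intro n haltn hinjn hna
    by_cases hpar : Even n
    · rw [if_pos hpar]
      have hcov : ∃ y, s(p n, y) ∈ N := covers_iff.mp (hNcov _ (hna hpar))
      have hstep : p (n+1) = pt N (p n) := by rw [hp, walk_succ n, if_pos hpar]
      rw [hstep]
      refine ⟨pt_spec hcov, fun hmem => ?_⟩
      rcases Nat.eq_zero_or_pos n with rfl | hnpos
      · exact hu ⟨_, hmem, by rw [hp0]; exact Sym2.mem_mk_left _ _⟩
      · obtain ⟨n', rfl⟩ : ∃ n', n = n' + 1 := ⟨n - 1, by omega⟩
        have hodd' : ¬ Even n' := fun h => (Nat.even_add_one.mp hpar) h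
        have hprev : s(p n', p (n'+1)) ∈ M \ N := by
          have h := haltn n' (by omega); rwa [if_neg hodd'] at h
        have heq := matching_eq hM.1 hmem hprev.1 (Sym2.mem_mk_left _ _) (Sym2.mem_mk_right _ _)
        exact hprev.2 (heq ▸ pt_spec hcov)
    · rw [if_neg hpar]
      have hnpos : 0 < n := by
        rcases Nat.eq_zero_or_pos n with rfl | h
        · exact absurd (by simp) hpar
        · exact h
      have hnu : p n ≠ u := by
        intro h
        have := hinjn (Set.mem_Iic.mpr le_rfl) (Set.mem_Iic.mpr (Nat.zero_le n)) (by rw [h, hp0])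
        omega
      have hcov : ∃ y, s(p n, y) ∈ M := covers_iff.mp (covers_of_ne hM hu hnu)
      have hstep : p (n+1) = pt M (p n) := by rw [hp, walk_succ n, if_neg hpar]
      rw [hstep]
      refine ⟨pt_spec hcov, fun hmem => ?_⟩
      obtain ⟨n', rfl⟩ : ∃ n', n = n' + 1 := ⟨n - 1, by omega⟩
      have heven' : Even n' := by
        rcases Nat.even_or_odd n' with h | h
        · exact h
        · exact absurd (by simpa using h.add_one) hpar
      have hprev : s(p n', p (n'+1)) ∈ N \ M := by
        have h := haltn n' (by omega); rwa [if_pos heven'] at h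
      have heq := matching_eq hN hmem hprev.1 (Sym2.mem_mk_left _ _) (Sym2.mem_mk_right _ _)
      exact hprev.2 (heq ▸ pt_spec hcov)
  -- key invariant
  have key : ∀ n, (∀ m, 1 ≤ m → m ≤ n → p m ∉ Q) →
      (∀ m < n, s(p m, p (m+1)) ∈ (if Even m then N \ M else M \ N)) ∧
      Set.InjOn p (Set.Iic n) := by
    intro n
    induction n with
    | zero =>
      intro _
      refine ⟨by omega, ?_⟩
      intro x hx y hy _
      rw [Set.mem_Iic, Nat.le_zero] at hx hy
      rw [hx, hy]
    | succ n ih =>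
      intro hnohit
      obtain ⟨haltn, hinjn⟩ := ih (fun m h1 h2 => hnohit m h1 (by omega))
      have haltn1 : s(p n, p (n+1)) ∈ (if Even n then N \ M else M \ N) := by
        refine step n haltn hinjn (fun hpar => ?_)
        rcases Nat.eq_zero_or_pos n with rfl | hnpos
        · rw [hp0]; exact hua
        · intro h
          exact (hnohit n hnpos (by omega)) (h ▸ hQa)
      have haltall : ∀ m < n+1, s(p m, p (m+1)) ∈ (if Even m then N \ M else M \ N) := by
        intro m hm
        rcases Nat.lt_or_ge m n with h | h
        · exact haltn m h
        · have : m = n := by omega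
          rw [this]; exact haltn1
      refine ⟨haltall, injOn_Iic_succ hinjn ?_⟩
      intro i hi hrep
      obtain ⟨hi0, -, hclose⟩ := walk_norepeat hN hM.1 p n (fun m hm => haltall m (by omega))
        hinjn hi hrep
      exact hu ⟨_, hclose.1, by rw [hrep, hi0, hp0]; exact Sym2.mem_mk_right _ _⟩
  -- a hit exists
  have hhit : ∃ m, 1 ≤ m ∧ p m ∈ Q := by
    by_contra hc
    push_neg at hc
    have hinj := (key (Fintype.card V + 1) (fun m h1 _ => hc m h1)).2
    obtain ⟨x, y, hxy, hpxy⟩ := Fintype.exists_ne_map_eq_of_card_lt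
      (fun i : Fin (Fintype.card V + 2) => p i) (by simp)
    exact hxy (Fin.ext (hinj (Set.mem_Iic.mpr (by omega)) (Set.mem_Iic.mpr (by omega)) hpxy))
  set r := Nat.find hhit with hr
  obtain ⟨hr1, hrQ⟩ := Nat.find_spec hhit
  have hnohit : ∀ m, 1 ≤ m → m < r → p m ∉ Q := by
    intro m h1 h2 hQ
    exact Nat.find_min hhit h2 ⟨h1, hQ⟩
  obtain ⟨haltr', hinjr'⟩ := key (r - 1) (fun m h1 h2 => hnohit m h1 (by omega))
  have haltr1 : s(p (r-1), p (r-1+1)) ∈ (if Even (r-1) then N \ M else M \ N) := by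
    refine step (r-1) haltr' hinjr' (fun hpar => ?_)
    rcases Nat.eq_or_lt_of_le hr1 with h | h
    · rw [(by omega : r - 1 = 0), hp0]; exact hua
    · intro hcontra
      exact (hnohit (r-1) (by omega) (by omega)) (hcontra ▸ hQa)
  have haltall : ∀ m < r, s(p m, p (m+1)) ∈ (if Even m then N \ M else M \ N) := by
    intro m hm
    rcases Nat.lt_or_ge m (r-1) with h | h
    · exact haltr' m h
    · have : m = r - 1 := by omega
      rw [this]; exact haltr1
  -- r is odd
  have hrodd : ¬ Even r := by
    intro heven
    have hr2 : 2 ≤ r := by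
      rcases Nat.eq_or_lt_of_le hr1 with h | h
      · exfalso
        have hre : r = 1 := by omega
        exact Nat.not_even_one (hre ▸ heven)
      · omega
    have hoddr1 : ¬ Even (r - 1) := by
      intro h
      obtain ⟨c, hc⟩ := h
      obtain ⟨d, hd⟩ := heven
      omega
    have hprev : s(p (r-1), p (r-1+1)) ∈ M \ N := by
      have h := haltr1; rwa [if_neg hoddr1] at h
    rw [(by omega : r - 1 + 1 = r)] at hprev
    have : p (r-1) ∈ Q := hQM (p r) hrQ (p (r-1)) (by rw [Sym2.eq_swap]; exact hprev.1)
    exact hnohit (r-1) (by omega) (by omega) this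
  have hmod : r % 2 = 1 := Nat.odd_iff.mp (Nat.not_even_iff_odd.mp hrodd)
  obtain ⟨t, ht⟩ : ∃ t, r = 2 * t + 1 := ⟨r / 2, by omega⟩
  -- injective up to r
  have hinjr : Set.InjOn p (Set.Iic r) := by
    rw [(by omega : r = (r - 1) + 1)]
    refine injOn_Iic_succ hinjr' ?_
    intro i hi hrep
    rw [(by omega : r - 1 + 1 = r)] at hrep
    rcases Nat.eq_zero_or_pos i with rfl | hipos
    · rw [hp0] at hrep
      exact hQu (hrep ▸ hrQ)
    · exact hnohit i hipos (by omega) (hrep ▸ hrQ)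
  -- edge at r
  have hru : p r ≠ u := fun h => hQu (h ▸ hrQ)
  have hcovr : ∃ y, s(p r, y) ∈ M := covers_iff.mp (covers_of_ne hM hu hru)
  have hstepr : p (r+1) = pt M (p r) := by rw [hp, walk_succ r, if_neg hrodd]
  have hedgeR : s(p r, p (r+1)) ∈ M := by rw [hstepr]; exact pt_spec hcovr
  have haQ : p (r+1) ∈ Q := hQM (p r) hrQ (p (r+1)) hedgeR
  -- injective up to r+1
  have hinjr1 : Set.InjOn p (Set.Iic (r+1)) := by
    refine injOn_Iic_succ hinjr ?_
    intro i hi hrep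
    rcases Nat.eq_or_lt_of_le hi with h | h
    · rw [h] at hrep
      exact edge_ne (hM.1.1 hedgeR) hrep.symm
    · rcases Nat.eq_zero_or_pos i with rfl | hipos
      · rw [hp0] at hrep
        exact hQu (hrep ▸ haQ)
      · exact hnohit i hipos (by omega) (hrep ▸ haQ)
  refine ⟨t, p, hp0, ?_, ?_, ?_, ?_, ?_, ?_⟩
  · rw [(by omega : 2*t+2 = r+1)]; exact hinjr1
  · intro m hm; exact haltall m (by omega)
  · rw [(by omega : 2*t+1 = r), (by omega : 2*t+2 = r+1)]; exact hedgeR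
  · rw [(by omega : 2*t+1 = r)]; exact hrQ
  · rw [(by omega : 2*t+2 = r+1)]; exact haQ
  · intro m h1 h2; exact hnohit m h1 (by omega)

end Stmt5

namespace Stmt5
open Classical

variable {V : Type*}

/-- re-index the cycle to start at a', walking away from b' -/
lemma xseq {G : SimpleGraph V} {M M' : Set (Sym2 V)} {s : ℕ} {q : ℕ → V}
    (hM : IsMatchingOn G M)
    (hs1 : 1 ≤ s) (hq2s : q (2*s) = q 0) (hqinj : Set.InjOn q (Set.Iio (2*s)))
    (hqalt : ∀ n < 2*s, s(q n, q (n+1)) ∈ (if Even n then M \ M' else M' \ M))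
    {b' a' : V} {l : ℕ} (hl : l < 2*s) (hbl : q l = b')
    (hedge : s(b', a') ∈ M) :
    ∃ x : ℕ → V, x 0 = a' ∧ x (2*s-1) = b' ∧ Set.InjOn x (Set.Iio (2*s)) ∧
      (∀ m, m+2 ≤ 2*s → s(x m, x (m+1)) ∈ (if Even m then M' \ M else M \ M')) ∧
      (∀ m < 2*s, x m ∈ q '' (Set.Iio (2*s))) ∧ s(b', a') ∈ M \ M' := by
  have h2s0 : 0 < 2*s := by omega
  set q' : ℕ → V := fun n => q (n % (2*s)) with hq'
  have hq'val : ∀ n < 2*s, q' n = q n := fun n hn => by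
    rw [hq']; simp only []; rw [Nat.mod_eq_of_lt hn]
  have hq'succ : ∀ n, q' (n+1) = q ((n % (2*s)) + 1) := by
    intro n
    have hm : n % (2*s) < 2*s := Nat.mod_lt n h2s0
    have h1 : (n+1) % (2*s) = (n % (2*s) + 1) % (2*s) := by
      conv_lhs => rw [← Nat.mod_add_mod]
    rcases Nat.lt_or_ge (n % (2*s) + 1) (2*s) with h | h
    · rw [hq']; simp only []; rw [h1, Nat.mod_eq_of_lt h]
    · have h2 : n % (2*s) + 1 = 2*s := by omega
      rw [hq']; simp only []; rw [h1, h2, Nat.mod_self, ← hq2s]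
  have hq'alt : ∀ n, s(q' n, q' (n+1)) ∈ (if Even n then M \ M' else M' \ M) := by
    intro n
    have hm : n % (2*s) < 2*s := Nat.mod_lt n h2s0
    have hpar : (Even n ↔ Even (n % (2*s))) := by
      rw [Nat.even_iff, Nat.even_iff, Nat.mod_mod_of_dvd n ⟨s, rfl⟩]
    have h := hqalt (n % (2*s)) hm
    rw [hq'succ n]
    have hv : q' n = q (n % (2*s)) := rfl
    rw [hv]
    by_cases he : Even n
    · rw [if_pos he]; rwa [if_pos (hpar.mp he)] at h
    · rw [if_neg he]; rwa [if_neg (fun hc => he (hpar.mpr hc))] at h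
  have hq'Q : ∀ n, q' n ∈ q '' (Set.Iio (2*s)) :=
    fun n => ⟨n % (2*s), Set.mem_Iio.mpr (Nat.mod_lt n h2s0), rfl⟩
  have hq'inj : ∀ c, ∀ m < 2*s, ∀ m' < 2*s, q' (c+m) = q' (c+m') → m = m' := by
    intro c m hm m' hm' h
    have h2 : (c+m) % (2*s) = (c+m') % (2*s) :=
      hqinj (Set.mem_Iio.mpr (Nat.mod_lt _ h2s0)) (Set.mem_Iio.mpr (Nat.mod_lt _ h2s0)) h
    have h3 : m % (2*s) = m' % (2*s) := Nat.ModEq.add_left_cancel' c h2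
    rwa [Nat.mod_eq_of_lt hm, Nat.mod_eq_of_lt hm'] at h3
  by_cases he : Even l
  · -- a' = q (l+1), direction increasing
    have hl1 : l + 1 < 2*s := by
      obtain ⟨c, hc⟩ := he; omega
    have hqale : s(q l, q (l+1)) ∈ M \ M' := by
      have h := hqalt l hl; rwa [if_pos he] at h
    have heq : s(b', a') = s(q l, q (l+1)) :=
      matching_eq hM hedge hqale.1 (Sym2.mem_mk_left _ _) (hbl ▸ Sym2.mem_mk_left _ _)
    have ha' : a' = q (l+1) := by
      rw [Sym2.eq_iff] at heq
      rcases heq with ⟨h1, h2⟩ | ⟨h1, h2⟩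
      · exact h2
      · exfalso
        have hll : l = l + 1 := hqinj (Set.mem_Iio.mpr hl) (Set.mem_Iio.mpr hl1)
          (show q l = q (l+1) by rw [hbl, h1])
        omega
    refine ⟨fun m => q' (l+1+m), ?_, ?_, ?_, ?_, fun m _ => hq'Q _, by
      rw [heq]; exact hqale⟩
    · show q' (l+1+0) = a'
      rw [Nat.add_zero, hq'val _ hl1, ha']
    · show q' (l+1+(2*s-1)) = b'
      rw [(by omega : l+1+(2*s-1) = l + 2*s), hq']
      simp only []
      rw [Nat.add_mod_right, Nat.mod_eq_of_lt hl, hbl]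
    · intro m hm m' hm' h
      exact hq'inj (l+1) m (Set.mem_Iio.mp hm) m' (Set.mem_Iio.mp hm') h
    · intro m hm2
      have h := hq'alt (l+1+m)
      have harg : l+1+m+1 = l+1+(m+1) := by omega
      rw [harg] at h
      by_cases hmp : Even m
      · rw [if_pos hmp]
        have : ¬ Even (l+1+m) := by
          obtain ⟨c, hc⟩ := he; obtain ⟨d, hd⟩ := hmp
          intro hcon; obtain ⟨e, he'⟩ := hcon; omega
        rwa [if_neg this] at h
      · rw [if_neg hmp]
        have : Even (l+1+m) := by
          obtain ⟨c, hc⟩ := he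
          have hmodd : m % 2 = 1 := Nat.odd_iff.mp (Nat.not_even_iff_odd.mp hmp)
          exact Nat.even_iff.mpr (by omega)
        rwa [if_pos this] at h
  · -- l odd, a' = q (l-1), direction decreasing
    have hlpos : 1 ≤ l := by
      rcases Nat.eq_zero_or_pos l with rfl | h
      · exact absurd (by simp) he
      · exact h
    have hev1 : Even (l-1) := by
      have hmodd : l % 2 = 1 := Nat.odd_iff.mp (Nat.not_even_iff_odd.mp he)
      exact Nat.even_iff.mpr (by omega)
    have hqale : s(q (l-1), q l) ∈ M \ M' := by
      have h := hqalt (l-1) (by omega)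
      rw [if_pos hev1, (by omega : l - 1 + 1 = l)] at h
      exact h
    have heq : s(b', a') = s(q (l-1), q l) :=
      matching_eq hM hedge hqale.1 (Sym2.mem_mk_left _ _) (hbl ▸ Sym2.mem_mk_right _ _)
    have ha' : a' = q (l-1) := by
      rw [Sym2.eq_iff] at heq
      rcases heq with ⟨h1, h2⟩ | ⟨h1, h2⟩
      · exfalso
        have hll : l = l - 1 := hqinj (Set.mem_Iio.mpr hl)
          (Set.mem_Iio.mpr (show l - 1 < 2*s by omega))
          (show q l = q (l-1) by rw [hbl, h1])
        omega
      · exact h2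
    refine ⟨fun m => q' ((l-1) + (2*s - m)), ?_, ?_, ?_, ?_, fun m _ => hq'Q _, by
      rw [heq]; exact hqale⟩
    · show q' ((l-1) + (2*s - 0)) = a'
      rw [Nat.sub_zero, hq']
      simp only []
      rw [Nat.add_mod_right, Nat.mod_eq_of_lt (by omega : l - 1 < 2*s), ha']
    · show q' ((l-1) + (2*s - (2*s-1))) = b'
      rw [(by omega : 2*s - (2*s-1) = 1), (by omega : l - 1 + 1 = l), hq'val l hl, hbl]
    · intro m hm m' hm' h
      rw [Set.mem_Iio] at hm hm'
      have h2 : ((l-1) + (2*s-m)) % (2*s) = ((l-1)+(2*s-m')) % (2*s) :=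
        hqinj (Set.mem_Iio.mpr (Nat.mod_lt _ h2s0)) (Set.mem_Iio.mpr (Nat.mod_lt _ h2s0)) h
      have h3 : (2*s-m) % (2*s) = (2*s-m') % (2*s) := Nat.ModEq.add_left_cancel' (l-1) h2
      rcases Nat.eq_zero_or_pos m with rfl | hm0
      · rcases Nat.eq_zero_or_pos m' with rfl | hm0'
        · rfl
        · rw [Nat.sub_zero, Nat.mod_self, Nat.mod_eq_of_lt (by omega)] at h3; omega
      · rcases Nat.eq_zero_or_pos m' with rfl | hm0'
        · rw [Nat.sub_zero, Nat.mod_self, Nat.mod_eq_of_lt (by omega)] at h3; omega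
        · rw [Nat.mod_eq_of_lt (by omega), Nat.mod_eq_of_lt (by omega)] at h3; omega
    · intro m hm2
      have hmodd : l % 2 = 1 := Nat.odd_iff.mp (Nat.not_even_iff_odd.mp he)
      have harg : (l-1) + (2*s - m) = ((l-1) + (2*s - (m+1))) + 1 := by omega
      have h' := hq'alt ((l-1) + (2*s - (m+1)))
      show s(q' ((l-1) + (2*s - m)), q' ((l-1) + (2*s - (m+1)))) ∈ _
      rw [harg, Sym2.eq_swap]
      by_cases hmp : Even m
      · rw [if_pos hmp]
        have hnodd : ¬ Even ((l-1) + (2*s - (m+1))) := by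
          rw [Nat.even_iff]; obtain ⟨d, hd⟩ := hmp; omega
        rwa [if_neg hnodd] at h'
      · rw [if_neg hmp]
        have hmodd2 : m % 2 = 1 := Nat.odd_iff.mp (Nat.not_even_iff_odd.mp hmp)
        have hnev : Even ((l-1) + (2*s - (m+1))) := by
          rw [Nat.even_iff]; omega
        rwa [if_pos hnev] at h'

end Stmt5

namespace Stmt5
open Classical

variable {V : Type*}

lemma diff_edge_exists {G : SimpleGraph V} {M M' : Set (Sym2 V)} {u : V}
    (hM : IsOddMatching G M) (hM' : IsOddMatching G M')
    (hu : ¬ Covers M u) (hu' : ¬ Covers M' u) (hne : M ≠ M') :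
    ∃ a b, s(a,b) ∈ M \ M' := by
  by_contra hno
  push_neg at hno
  have hsub : M ⊆ M' := by
    intro e he
    obtain ⟨a, b, rfl⟩ := sym2_rep e
    by_contra hc
    exact hno a b ⟨he, hc⟩
  refine hne (Set.Subset.antisymm hsub ?_)
  intro e he'
  obtain ⟨a, b, rfl⟩ := sym2_rep e
  have hbu : a ≠ u := fun h => hu' ⟨s(a,b), he', by rw [← h]; exact Sym2.mem_mk_left a b⟩
  obtain ⟨f, hf, haf⟩ := covers_of_ne hM hu hbu
  have hfe : f = s(a,b) := matching_eq hM'.1 (hsub hf) he' haf (Sym2.mem_mk_left a b)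
  exact hfe ▸ hf

set_option maxHeartbeats 2000000 in
/-- the same-isolated-vertex case: rotate a cycle of the symmetric difference -/
lemma cycle_case {G : SimpleGraph V} [Fintype V] {M M' : Set (Sym2 V)} {u : V}
    (hfc : ∀ v : V, HasPerfectMatchingAvoiding G {v})
    (hM : IsOddMatching G M) (hM' : IsOddMatching G M')
    (hu : ¬ Covers M u) (hu' : ¬ Covers M' u) (hne : M ≠ M') :
    ∃ F : Set (Sym2 V), Reconfig G M F ∧ IsOddMatching G F ∧
      (F \ M') ∪ (M' \ F) ⊂ (M \ M') ∪ (M' \ M) := by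
  obtain ⟨a₀, b₀, hab⟩ := diff_edge_exists hM hM' hu hu' hne
  obtain ⟨s, q, hs1, hq2s, hqinj, hqalt⟩ := cycle_extract hM hM' hu hu' hab
  have h2s0 : 0 < 2*s := by omega
  set Q : Set V := q '' (Set.Iio (2*s)) with hQdef
  -- Q is closed under M-edges
  have hQM : ∀ z ∈ Q, ∀ y, s(z,y) ∈ M → y ∈ Q := by
    rintro z ⟨l, hl, rfl⟩ y hy
    rw [Set.mem_Iio] at hl
    by_cases hpar : Even l
    · have hl1 : l + 1 < 2*s := by obtain ⟨c, hc⟩ := hpar; omega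
      have hqe : s(q l, q (l+1)) ∈ M \ M' := by
        have h := hqalt l hl; rwa [if_pos hpar] at h
      have heq : s(q l, y) = s(q l, q (l+1)) :=
        matching_eq hM.1 hy hqe.1 (Sym2.mem_mk_left _ _) (Sym2.mem_mk_left _ _)
      rw [Sym2.eq_iff] at heq
      rcases heq with ⟨h1, h2⟩ | ⟨h1, h2⟩
      · rw [h2]; exact ⟨l+1, Set.mem_Iio.mpr hl1, rfl⟩
      · rw [h2]; exact ⟨l, Set.mem_Iio.mpr hl, rfl⟩
    · have hlpos : 1 ≤ l := by
        rcases Nat.eq_zero_or_pos l with rfl | h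
        · exact absurd (by simp) hpar
        · exact h
      have hev1 : Even (l-1) := by
        have hmodd : l % 2 = 1 := Nat.odd_iff.mp (Nat.not_even_iff_odd.mp hpar)
        exact Nat.even_iff.mpr (by omega)
      have hqe : s(q (l-1), q l) ∈ M \ M' := by
        have h := hqalt (l-1) (by omega)
        rw [if_pos hev1, (by omega : l - 1 + 1 = l)] at h
        exact h
      have heq : s(q l, y) = s(q (l-1), q l) :=
        matching_eq hM.1 hy hqe.1 (Sym2.mem_mk_left _ _) (Sym2.mem_mk_right _ _)
      rw [Sym2.eq_iff] at heq
      rcases heq with ⟨h1, h2⟩ | ⟨h1, h2⟩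
      · rw [h2]; exact ⟨l, Set.mem_Iio.mpr hl, rfl⟩
      · rw [h2]; exact ⟨l-1, Set.mem_Iio.mpr (by omega), rfl⟩
  -- u is not on the cycle
  have hQu : u ∉ Q := by
    rintro ⟨l, hl, hql⟩
    rw [Set.mem_Iio] at hl
    by_cases hpar : Even l
    · have hqe := hqalt l hl
      rw [if_pos hpar] at hqe
      exact hu ⟨_, hqe.1, by rw [← hql]; exact Sym2.mem_mk_left _ _⟩
    · have hlpos : 1 ≤ l := by
        rcases Nat.eq_zero_or_pos l with rfl | h
        · exact absurd (by simp) hpar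
        · exact h
      have hev1 : Even (l-1) := by
        have hmodd : l % 2 = 1 := Nat.odd_iff.mp (Nat.not_even_iff_odd.mp hpar)
        exact Nat.even_iff.mpr (by omega)
      have hqe := hqalt (l-1) (by omega)
      rw [if_pos hev1, (by omega : l - 1 + 1 = l)] at hqe
      exact hu ⟨_, hqe.1, by rw [← hql]; exact Sym2.mem_mk_right _ _⟩
  have haQ : q 0 ∈ Q := ⟨0, Set.mem_Iio.mpr h2s0, rfl⟩
  have hua : u ≠ q 0 := fun h => hQu (h ▸ haQ)
  obtain ⟨N, hNm, hNa, hNc⟩ := hfc (q 0)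
  have hNcov : ∀ x, x ≠ q 0 → Covers N x := fun x hx => hNc x (by simpa using hx)
  obtain ⟨t, p, hp0, hpinj, hpalt, hpM, hbQ, haQ', hnohit⟩ :=
    reach_cycle hM hu hNm hNcov Q haQ hQu hQM hua
  obtain ⟨l, hlQ, hbl⟩ := hbQ
  obtain ⟨x, hx0, hxb, hxinj, hxedge, hxQ, hbarMM'⟩ := xseq hM.1 hs1 hq2s hqinj hqalt
      (Set.mem_Iio.mp hlQ) hbl hpM
  have hxne : ∀ m, m < 2*s → ∀ m', m' < 2*s → x m = x m' → m = m' :=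
    fun m hm m' hm' h => hxinj (Set.mem_Iio.mpr hm) (Set.mem_Iio.mpr hm') h
  have hpne : ∀ m, m ≤ 2*t+2 → ∀ m', m' ≤ 2*t+2 → p m = p m' → m = m' :=
    fun m hm m' hm' h => hpinj (Set.mem_Iic.mpr hm) (Set.mem_Iic.mpr hm') h
  have hpQ : ∀ m, m ≤ 2*t → p m ∉ Q := by
    intro m hm
    rcases Nat.eq_zero_or_pos m with rfl | h
    · rw [hp0]; exact hQu
    · exact hnohit m h hm
  -- phase 1
  have hpinj1 : Set.InjOn p (Set.Iic (2*(t+1))) := by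
    rw [(by ring : 2*(t+1) = 2*t+2)]; exact hpinj
  have hG1 : ∀ i < t+1, s(p (2*i), p (2*i+1)) ∈ G.edgeSet := by
    intro i hi
    have h := hpalt (2*i) (by omega)
    rw [if_pos ⟨i, by ring⟩] at h
    exact hNm.1 h.1
  have hMe1 : ∀ i < t+1, s(p (2*i+1), p (2*i+2)) ∈ M := by
    intro i hi
    rcases Nat.lt_or_ge i t with h | h
    · have h2 := hpalt (2*i+1) (by omega)
      rw [if_neg (by rintro ⟨c, hc⟩; omega)] at h2
      exact h2.1
    · have hit : i = t := by omega
      rw [hit]; exact hpM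
  obtain ⟨hrec1, hodd1, hiso1⟩ := transport p hM (by rw [hp0]; exact hu) (t+1) hpinj1 hG1 hMe1
  have hiso1' : ¬ Covers ((M \ {e | ∃ j < t+1, e = s(p (2*j+1), p (2*j+2))}) ∪
      {e | ∃ j < t+1, e = s(p (2*j), p (2*j+1))}) (p (2*t+2)) := by
    rw [(by ring : 2*t+2 = 2*(t+1))]; exact hiso1
  -- phase 2 data
  set y : ℕ → V := fun m => if m = 2*s then p (2*t) else x m with hydef
  have hyval : ∀ m, m < 2*s → y m = x m := by
    intro m hm; rw [hydef]; simp only []; rw [if_neg (by omega)]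
  have hy2s : y (2*s) = p (2*t) := by simp [hydef]
  have hy0 : y 0 = p (2*t+2) := by rw [hyval 0 (by omega), hx0]
  have hp2tQ : p (2*t) ∉ Q := hpQ (2*t) le_rfl
  have hyinj : Set.InjOn y (Set.Iic (2*s)) := by
    intro m hm m' hm' h
    rw [Set.mem_Iic] at hm hm'
    rcases Nat.lt_or_ge m (2*s) with h1 | h1
    · rcases Nat.lt_or_ge m' (2*s) with h2 | h2
      · exact hxne m h1 m' h2 (by rw [← hyval m h1, ← hyval m' h2]; exact h)
      · exfalso
        have hm2 : m' = 2*s := by omega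
        rw [hyval m h1, hm2, hy2s] at h
        exact hp2tQ (h ▸ hxQ m h1)
    · rcases Nat.lt_or_ge m' (2*s) with h2 | h2
      · exfalso
        have hm1 : m = 2*s := by omega
        rw [hyval m' h2, hm1, hy2s] at h
        exact hp2tQ (h.symm ▸ hxQ m' h2)
      · omega
  have hG2 : ∀ i < s, s(y (2*i), y (2*i+1)) ∈ G.edgeSet := by
    intro i hi
    rw [hyval (2*i) (by omega), hyval (2*i+1) (by omega)]
    have h := hxedge (2*i) (by omega)
    rw [if_pos ⟨i, by ring⟩] at h
    exact hM'.1.1 h.1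
  -- the A1-edge endpoints are outside Q, the cycle edges have endpoints inside Q
  have hA1out : ∀ j, j < t+1 → p (2*j) ∉ Q ∧ p (2*j+1) ∉ Q ∨ j = t := by
    intro j hj
    rcases Nat.lt_or_ge j t with h | h
    · exact Or.inl ⟨hpQ (2*j) (by omega), hpQ (2*j+1) (by omega)⟩
    · exact Or.inr (by omega)
  have hMe2 : ∀ i < s, s(y (2*i+1), y (2*i+2)) ∈
      ((M \ {e | ∃ j < t+1, e = s(p (2*j+1), p (2*j+2))}) ∪
        {e | ∃ j < t+1, e = s(p (2*j), p (2*j+1))}) := by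
    intro i hi
    rcases Nat.lt_or_ge i (s-1) with h | h
    · rw [hyval (2*i+1) (by omega), hyval (2*i+2) (by omega)]
      have hedge : s(x (2*i+1), x (2*i+2)) ∈ M \ M' := by
        have h2 := hxedge (2*i+1) (by omega)
        rwa [if_neg (by rintro ⟨c, hc⟩; omega)] at h2
      refine Or.inl ⟨hedge.1, ?_⟩
      rintro ⟨j, hj, hje⟩
      rcases Nat.lt_or_ge j t with hjt | hjt
      · -- p (2j+1) ∉ Q but it is an endpoint of a cycle edge
        have hout : p (2*j+1) ∉ Q := hpQ (2*j+1) (by omega)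
        rw [Sym2.eq_iff] at hje
        rcases hje with ⟨h1, h2⟩ | ⟨h1, h2⟩
        · exact hout (h1 ▸ hxQ (2*i+1) (by omega))
        · exact hout (h2 ▸ hxQ (2*i+2) (by omega))
      · have hjt' : j = t := by omega
        rw [hjt'] at hje
        -- e = s(p(2t+1), p(2t+2)) = s(x(2s-1), x 0)
        rw [← hxb, ← hx0] at hje
        rw [Sym2.eq_iff] at hje
        rcases hje with ⟨h1, h2⟩ | ⟨h1, h2⟩
        · have := hxne (2*i+1) (by omega) (2*s-1) (by omega) h1
          omega
        · have := hxne (2*i+1) (by omega) 0 (by omega) h1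
          omega
    · have hi' : i = s - 1 := by omega
      rw [hi', (by omega : 2*(s-1)+1 = 2*s-1), (by omega : 2*(s-1)+2 = 2*s)]
      rw [hyval (2*s-1) (by omega), hxb, hy2s]
      exact Or.inr ⟨t, by omega, Sym2.eq_swap⟩
  obtain ⟨hrec2, hodd2, hiso2⟩ := transport y hodd1 (by rw [hy0]; exact hiso1')
    s hyinj hG2 hMe2
  -- phase 3
  set pr : ℕ → V := fun j => p (2*t - j) with hprdef
  have hpr : ∀ j, pr j = p (2*t - j) := fun j => rfl
  have hpr0 : pr 0 = p (2*t) := by rw [hpr 0, Nat.sub_zero]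
  have h03 : ¬ Covers ((((M \ {e : Sym2 V | ∃ j < t+1, e = s(p (2*j+1), p (2*j+2))}) ∪ {e : Sym2 V | ∃ j < t+1, e = s(p (2*j), p (2*j+1))}) \ {e : Sym2 V | ∃ j < s, e = s(y (2*j+1), y (2*j+2))}) ∪ {e : Sym2 V | ∃ j < s, e = s(y (2*j), y (2*j+1))}) (pr 0) := by
    rw [hpr0, ← hy2s]; exact hiso2
  have hprinj : Set.InjOn pr (Set.Iic (2*t)) := by
    intro m hm m' hm' h
    rw [Set.mem_Iic] at hm hm'
    have := hpne (2*t - m) (by omega) (2*t - m') (by omega) h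
    omega
  have hG3 : ∀ i < t, s(pr (2*i), pr (2*i+1)) ∈ G.edgeSet := by
    intro i hi
    rw [hpr, hpr, (by omega : 2*t - 2*i = 2*(t-i-1)+2), (by omega : 2*t - (2*i+1) = 2*(t-i-1)+1),
      Sym2.eq_swap]
    have h := hpalt (2*(t-i-1)+1) (by omega)
    rw [if_neg (by rintro ⟨c, hc⟩; omega)] at h
    exact hM.1.1 h.1
  have hMe3 : ∀ i < t, s(pr (2*i+1), pr (2*i+2)) ∈ ((((M \ {e : Sym2 V | ∃ j < t+1, e = s(p (2*j+1), p (2*j+2))}) ∪ {e : Sym2 V | ∃ j < t+1, e = s(p (2*j), p (2*j+1))}) \ {e : Sym2 V | ∃ j < s, e = s(y (2*j+1), y (2*j+2))}) ∪ {e : Sym2 V | ∃ j < s, e = s(y (2*j), y (2*j+1))}) := by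
    intro i hi
    rw [hpr, hpr, (by omega : 2*t - (2*i+1) = 2*(t-i-1)+1), (by omega : 2*t - (2*i+2) = 2*(t-i-1)),
      Sym2.eq_swap]
    refine Or.inl ⟨Or.inr ⟨t-i-1, by omega, rfl⟩, ?_⟩
    rintro ⟨j, hj, hje⟩
    rcases Nat.lt_or_ge j (s-1) with hjs | hjs
    · rw [hyval (2*j+1) (by omega), hyval (2*j+2) (by omega)] at hje
      rw [Sym2.eq_iff] at hje
      have hout1 : p (2*(t-i-1)) ∉ Q := hpQ _ (by omega)
      rcases hje with ⟨h1, h2⟩ | ⟨h1, h2⟩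
      · exact hout1 (by rw [h1]; exact hxQ (2*j+1) (by omega))
      · exact hout1 (by rw [h1]; exact hxQ (2*j+2) (by omega))
    · have hj' : j = s - 1 := by omega
      rw [hj', (by omega : 2*(s-1)+1 = 2*s-1), (by omega : 2*(s-1)+2 = 2*s),
        hyval (2*s-1) (by omega), hxb, hy2s] at hje
      rcases sym2_eq_index hpinj (by omega) (by omega) (by omega) (by omega) hje with
        ⟨h1, h2⟩ | ⟨h1, h2⟩ <;> omega
  obtain ⟨hrec3, hodd3, hiso3⟩ := transport pr hodd2 h03 t hprinj hG3 hMe3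
  -- bookkeeping facts
  have hR3iff : ∀ e : Sym2 V, (∃ j < t, e = s(pr (2*j+1), pr (2*j+2))) ↔
      ((∃ j < t+1, e = s(p (2*j), p (2*j+1))) ∧ e ≠ s(p (2*t), p (2*t+1))) := by
    intro e
    constructor
    · rintro ⟨j, hj, rfl⟩
      rw [hpr, hpr, (by omega : 2*t - (2*j+1) = 2*(t-j-1)+1), (by omega : 2*t - (2*j+2) = 2*(t-j-1))]
      refine ⟨⟨t-j-1, by omega, Sym2.eq_swap⟩, ?_⟩
      intro h
      rcases sym2_eq_index hpinj (by omega) (by omega) (by omega) (by omega) h with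
        ⟨h1, h2⟩ | ⟨h1, h2⟩ <;> omega
    · rintro ⟨⟨j, hj, rfl⟩, hne2⟩
      rcases Nat.lt_or_ge j t with hjt | hjt
      · refine ⟨t-j-1, by omega, ?_⟩
        rw [hpr, hpr, (by omega : 2*t - (2*(t-j-1)+1) = 2*j+1), (by omega : 2*t - (2*(t-j-1)+2) = 2*j)]
        exact Sym2.eq_swap
      · exact absurd (by rw [(by omega : j = t)]) hne2
  have hA3iff : ∀ e : Sym2 V, (∃ j < t, e = s(pr (2*j), pr (2*j+1))) ↔
      ((∃ j < t+1, e = s(p (2*j+1), p (2*j+2))) ∧ e ≠ s(p (2*t+1), p (2*t+2))) := by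
    intro e
    constructor
    · rintro ⟨j, hj, rfl⟩
      rw [hpr, hpr, (by omega : 2*t - (2*j) = 2*(t-j-1)+2), (by omega : 2*t - (2*j+1) = 2*(t-j-1)+1)]
      refine ⟨⟨t-j-1, by omega, Sym2.eq_swap⟩, ?_⟩
      intro h
      rcases sym2_eq_index hpinj (by omega) (by omega) (by omega) (by omega) h with
        ⟨h1, h2⟩ | ⟨h1, h2⟩ <;> omega
    · rintro ⟨⟨j, hj, rfl⟩, hne2⟩
      rcases Nat.lt_or_ge j t with hjt | hjt
      · refine ⟨t-j-1, by omega, ?_⟩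
        rw [hpr, hpr, (by omega : 2*t - (2*(t-j-1)) = 2*j+2), (by omega : 2*t - (2*(t-j-1)+1) = 2*j+1)]
        exact Sym2.eq_swap
      · exact absurd (by rw [(by omega : j = t)]) hne2
  have hA1N : ∀ e : Sym2 V, (∃ j < t+1, e = s(p (2*j), p (2*j+1))) → e ∉ M := by
    rintro e ⟨j, hj, rfl⟩ hc
    have h := hpalt (2*j) (by omega)
    rw [if_pos ⟨j, by ring⟩] at h
    exact h.2 hc
  have hR1M : ∀ e : Sym2 V, (∃ j < t+1, e = s(p (2*j+1), p (2*j+2))) → e ∈ M := by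
    rintro e ⟨j, hj, rfl⟩
    exact hMe1 j hj
  have hebR2 : (∃ j < s, s(p (2*t), p (2*t+1)) = s(y (2*j+1), y (2*j+2))) := by
    refine ⟨s-1, by omega, ?_⟩
    rw [(by omega : 2*(s-1)+1 = 2*s-1), (by omega : 2*(s-1)+2 = 2*s),
      hyval (2*s-1) (by omega), hxb, hy2s]
    exact Sym2.eq_swap
  have hebA1 : (∃ j < t+1, s(p (2*t), p (2*t+1)) = s(p (2*j), p (2*j+1))) := ⟨t, by omega, rfl⟩
  have habarR1 : (∃ j < t+1, s(p (2*t+1), p (2*t+2)) = s(p (2*j+1), p (2*j+2))) := ⟨t, by omega, rfl⟩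
  have hR2fact : ∀ e : Sym2 V, (∃ j < s, e = s(y (2*j+1), y (2*j+2))) →
      e ≠ s(p (2*t), p (2*t+1)) →
      (e ∈ M \ M') ∧ ¬(∃ j < t+1, e = s(p (2*j), p (2*j+1))) ∧
        ¬(∃ j < t+1, e = s(p (2*j+1), p (2*j+2))) := by
    rintro e ⟨j, hj, rfl⟩ hne2
    rcases Nat.lt_or_ge j (s-1) with hjs | hjs
    · rw [hyval (2*j+1) (by omega), hyval (2*j+2) (by omega)] at hne2 ⊢
      have hedge : s(x (2*j+1), x (2*j+2)) ∈ M \ M' := by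
        have h2 := hxedge (2*j+1) (by omega)
        rwa [if_neg (by rintro ⟨c, hc⟩; omega)] at h2
      refine ⟨hedge, ?_, ?_⟩
      · rintro ⟨j', hj', hje⟩
        have hout : p (2*j') ∉ Q := hpQ (2*j') (by omega)
        rw [Sym2.eq_iff] at hje
        rcases hje with ⟨h1, h2⟩ | ⟨h1, h2⟩
        · exact hout (by rw [← h1]; exact hxQ (2*j+1) (by omega))
        · exact hout (by rw [← h2]; exact hxQ (2*j+2) (by omega))
      · rintro ⟨j', hj', hje⟩
        rcases Nat.lt_or_ge j' t with hjt | hjt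
        · have hout : p (2*j'+1) ∉ Q := hpQ (2*j'+1) (by omega)
          rw [Sym2.eq_iff] at hje
          rcases hje with ⟨h1, h2⟩ | ⟨h1, h2⟩
          · exact hout (by rw [← h1]; exact hxQ (2*j+1) (by omega))
          · exact hout (by rw [← h2]; exact hxQ (2*j+2) (by omega))
        · rw [(by omega : j' = t), ← hxb, ← hx0, Sym2.eq_iff] at hje
          rcases hje with ⟨h1, h2⟩ | ⟨h1, h2⟩
          · have := hxne (2*j+1) (by omega) (2*s-1) (by omega) h1
            omega
          · have := hxne (2*j+1) (by omega) 0 (by omega) h1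
            omega
    · exfalso
      apply hne2
      rw [(by omega : j = s-1), (by omega : 2*(s-1)+1 = 2*s-1), (by omega : 2*(s-1)+2 = 2*s),
        hyval (2*s-1) (by omega), hxb, hy2s]
      exact Sym2.eq_swap
  have hA2fact : ∀ e : Sym2 V, (∃ j < s, e = s(y (2*j), y (2*j+1))) →
      (e ∈ M' \ M) ∧ ¬(∃ j < t+1, e = s(p (2*j), p (2*j+1))) := by
    rintro e ⟨j, hj, rfl⟩
    rw [hyval (2*j) (by omega), hyval (2*j+1) (by omega)]
    have hedge : s(x (2*j), x (2*j+1)) ∈ M' \ M := by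
      have h2 := hxedge (2*j) (by omega)
      rwa [if_pos ⟨j, by ring⟩] at h2
    refine ⟨hedge, ?_⟩
    rintro ⟨j', hj', hje⟩
    have hout : p (2*j') ∉ Q := hpQ (2*j') (by omega)
    rw [Sym2.eq_iff] at hje
    rcases hje with ⟨h1, h2⟩ | ⟨h1, h2⟩
    · exact hout (by rw [← h1]; exact hxQ (2*j) (by omega))
    · exact hout (by rw [← h2]; exact hxQ (2*j+1) (by omega))
  -- the final matching equals M with the cycle rotated
  have hF : ((((((M \ {e : Sym2 V | ∃ j < t+1, e = s(p (2*j+1), p (2*j+2))}) ∪ {e : Sym2 V | ∃ j < t+1, e = s(p (2*j), p (2*j+1))}) \ {e : Sym2 V | ∃ j < s, e = s(y (2*j+1), y (2*j+2))}) ∪ {e : Sym2 V | ∃ j < s, e = s(y (2*j), y (2*j+1))}) \ {e : Sym2 V | ∃ j < t, e = s(pr (2*j+1), pr (2*j+2))}) ∪ {e : Sym2 V | ∃ j < t, e = s(pr (2*j), pr (2*j+1))}) = (M \ (({e : Sym2 V | ∃ j < s, e = s(y (2*j+1), y (2*j+2))} \ {s(p (2*t), p (2*t+1))}) ∪ {s(p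 (2*t+1), p (2*t+2))})) ∪ {e : Sym2 V | ∃ j < s, e = s(y (2*j), y (2*j+1))} := by
    ext e
    have hr3 := hR3iff e
    have ha3 := hA3iff e
    simp only [Set.mem_union, Set.mem_diff, Set.mem_singleton_iff, Set.mem_setOf_eq]
    constructor
    · rintro (⟨h1, hnR3⟩ | hA3e)
      · rcases h1 with ⟨h2, hnR2⟩ | hA2e
        · rcases h2 with ⟨hM1, hnR1⟩ | hA1e
          · refine Or.inl ⟨hM1, ?_⟩
            rintro (⟨hr2, hrne⟩ | habar)
            · exact hnR2 hr2
            · exact hnR1 (by rw [habar]; exact habarR1)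
          · exfalso
            by_cases heb : e = s(p (2*t), p (2*t+1))
            · exact hnR2 (by rw [heb]; exact hebR2)
            · exact hnR3 (hr3.mpr ⟨hA1e, heb⟩)
        · exact Or.inr hA2e
      · obtain ⟨hR1e, hnab⟩ := ha3.mp hA3e
        refine Or.inl ⟨hR1M e hR1e, ?_⟩
        rintro (⟨hr2, hrne⟩ | habar)
        · exact (hR2fact e hr2 hrne).2.2 hR1e
        · exact hnab habar
    · rintro (⟨hMe, hnCm⟩ | hA2e)
      · by_cases hR1e : (∃ j < t+1, e = s(p (2*j+1), p (2*j+2)))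
        · exact Or.inr (ha3.mpr ⟨hR1e, fun habar => hnCm (Or.inr habar)⟩)
        · refine Or.inl ⟨Or.inl ⟨Or.inl ⟨hMe, hR1e⟩, ?_⟩, ?_⟩
          · intro hr2
            by_cases heb : e = s(p (2*t), p (2*t+1))
            · exact hA1N e (by rw [heb]; exact hebA1) hMe
            · exact hnCm (Or.inl ⟨hr2, heb⟩)
          · intro hr3'
            exact hA1N e (hr3.mp hr3').1 hMe
      · refine Or.inl ⟨Or.inr hA2e, ?_⟩
        intro hr3'
        exact (hA2fact e hA2e).2 (hr3.mp hr3').1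
  -- the symmetric difference strictly decreases
  have hCmfact : ∀ e : Sym2 V, e ∈ (({e : Sym2 V | ∃ j < s, e = s(y (2*j+1), y (2*j+2))} \ {s(p (2*t), p (2*t+1))}) ∪ {s(p (2*t+1), p (2*t+2))}) → e ∈ M \ M' := by
    rintro e (⟨hr2, hrne⟩ | habar)
    · exact (hR2fact e hr2 hrne).1
    · rw [Set.mem_singleton_iff] at habar
      rw [habar]; exact hbarMM'
  have hss : ((((M \ (({e : Sym2 V | ∃ j < s, e = s(y (2*j+1), y (2*j+2))} \ {s(p (2*t), p (2*t+1))}) ∪ {s(p (2*t+1), p (2*t+2))})) ∪ {e : Sym2 V | ∃ j < s, e = s(y (2*j), y (2*j+1))}) \ M') ∪ (M' \ ((M \ (({e : Sym2 V | ∃ j < s, e = s(y (2*j+1), y (2*j+2))} \ {s(p (2*t), p (2*t+1))}) ∪ {s(p (2*t+1), p (2*t+2))})) ∪ {e : Sym2 V | ∃ j < s, e = s(y (2*j), y (2*j+1))}))) ⊂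
      ((M \ M') ∪ (M' \ M)) := by
    constructor
    · rintro e (⟨hFm, hnM'⟩ | ⟨hM'm, hnF⟩)
      · rcases hFm with ⟨heM, -⟩ | hA2e
        · exact Or.inl ⟨heM, hnM'⟩
        · exact absurd (hA2fact e hA2e).1.1 hnM'
      · refine Or.inr ⟨hM'm, fun heM => ?_⟩
        by_cases hCme : e ∈ (({e : Sym2 V | ∃ j < s, e = s(y (2*j+1), y (2*j+2))} \ {s(p (2*t), p (2*t+1))}) ∪ {s(p (2*t+1), p (2*t+2))})
        · exact (hCmfact e hCme).2 hM'm
        · exact hnF (Or.inl ⟨heM, hCme⟩)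
    · intro hback
      have h1 : s(p (2*t+1), p (2*t+2)) ∈ ((M \ M') ∪ (M' \ M)) := Or.inl hbarMM'
      have h2 := hback h1
      rcases h2 with ⟨hFm, -⟩ | ⟨hM'm, -⟩
      · rcases hFm with ⟨-, hnCm⟩ | hA2e
        · exact hnCm (Or.inr rfl)
        · exact (hA2fact _ hA2e).1.2 hbarMM'.1
      · exact hbarMM'.2 hM'm
  refine ⟨((((((M \ {e : Sym2 V | ∃ j < t+1, e = s(p (2*j+1), p (2*j+2))}) ∪ {e : Sym2 V | ∃ j < t+1, e = s(p (2*j), p (2*j+1))}) \ {e : Sym2 V | ∃ j < s, e = s(y (2*j+1), y (2*j+2))}) ∪ {e : Sym2 V | ∃ j < s, e = s(y (2*j), y (2*j+1))}) \ {e : Sym2 V | ∃ j < t, e = s(pr (2*j+1), pr (2*j+2))}) ∪ {e : Sym2 V | ∃ j < t, e = s(pr (2*j), pr (2*j+1))}), hrec1.trans (hrec2.trans hrec3), hodd3, ?_⟩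
  rw [hF]
  exact hss

end Stmt5

namespace Stmt5
open Classical

variable {V : Type*}

lemma flip_case {G : SimpleGraph V} {M M' : Set (Sym2 V)} {u u' : V}
    (hM : IsOddMatching G M) (hM' : IsOddMatching G M')
    (hu : ¬ Covers M u) (hu' : ¬ Covers M' u') (hne : u ≠ u') :
    ∃ F : Set (Sym2 V), Flip G M F ∧ IsOddMatching G F ∧
      (F \ M') ∪ (M' \ F) ⊂ (M \ M') ∪ (M' \ M) := by
  obtain ⟨v, hvM'⟩ := covers_iff.mp (covers_of_ne hM' hu' hne)
  have huv : s(u,v) ∈ G.edgeSet := hM'.1.1 hvM'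
  have hvu : v ≠ u := (edge_ne huv).symm
  obtain ⟨w, hvw⟩ := covers_iff.mp (covers_of_ne hM hu hvu)
  obtain ⟨hflip, hodd, hw⟩ := flip_step hM hu huv hvw
  have hvwM' : s(v,w) ∉ M' := by
    intro hc
    have heq := matching_eq hM'.1 hc hvM' (Sym2.mem_mk_left _ _) (Sym2.mem_mk_right _ _)
    exact hu ⟨s(v,w), hvw, by rw [heq]; exact Sym2.mem_mk_left _ _⟩
  refine ⟨_, hflip, hodd, ?_, ?_⟩
  · rintro e (⟨hFm, hnM'⟩ | ⟨hM'm, hnF⟩)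
    · rcases hFm with ⟨heM, -⟩ | heuv
      · exact Or.inl ⟨heM, hnM'⟩
      · exfalso
        rw [Set.mem_singleton_iff] at heuv
        exact hnM' (by rw [heuv]; exact hvM')
    · refine Or.inr ⟨hM'm, fun heM => ?_⟩
      by_cases hevw : e = s(v,w)
      · rw [hevw] at hM'm
        exact hvwM' hM'm
      · exact hnF (Or.inl ⟨heM, hevw⟩)
  · intro hback
    have h1 : s(v,w) ∈ ((M \ M') ∪ (M' \ M)) := Or.inl ⟨hvw, hvwM'⟩
    have h2 := hback h1
    rcases h2 with ⟨hFm, -⟩ | ⟨hM'm, -⟩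
    · rcases hFm with ⟨-, hne'⟩ | hcomp
      · exact hne' rfl
      · rw [Set.mem_singleton_iff] at hcomp
        exact hu ⟨s(v,w), hvw, by rw [hcomp]; exact Sym2.mem_mk_left u v⟩
    · exact hvwM' hM'm

lemma main {G : SimpleGraph V} [Fintype V]
    (hfc : ∀ v : V, HasPerfectMatchingAvoiding G {v}) :
    ∀ n : ℕ, ∀ M M' : Set (Sym2 V), IsOddMatching G M → IsOddMatching G M' →
      ((M \ M') ∪ (M' \ M)).ncard ≤ n → Reconfig G M M' := by
  intro n
  induction n with
  | zero =>
    intro M M' hM hM' hcard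
    have hfin : ((M \ M') ∪ (M' \ M)).Finite := Set.toFinite _
    have hempty : ((M \ M') ∪ (M' \ M)) = ∅ :=
      (Set.ncard_eq_zero hfin).mp (by omega)
    have hMM' : M = M' := by
      apply Set.Subset.antisymm
      · intro e he
        by_contra hc
        exact (Set.eq_empty_iff_forall_notMem.mp hempty e) (Or.inl ⟨he, hc⟩)
      · intro e he
        by_contra hc
        exact (Set.eq_empty_iff_forall_notMem.mp hempty e) (Or.inr ⟨he, hc⟩)
    rw [hMM']
    exact Relation.ReflTransGen.refl
  | succ n ih =>
    intro M M' hM hM' hcard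
    by_cases hMM' : M = M'
    · rw [hMM']; exact Relation.ReflTransGen.refl
    obtain ⟨u, hu, huuniq⟩ := hM.2
    obtain ⟨u', hu', hu'uniq⟩ := hM'.2
    by_cases huu : u = u'
    · subst huu
      obtain ⟨F, hrec, hoddF, hss⟩ := cycle_case hfc hM hM' hu hu' hMM'
      have hlt := Set.ncard_lt_ncard hss (Set.toFinite _)
      exact hrec.trans (ih F M' hoddF hM' (by omega))
    · obtain ⟨F, hflip, hoddF, hss⟩ := flip_case hM hM' hu hu' huu
      have hlt := Set.ncard_lt_ncard hss (Set.toFinite _)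
      exact Relation.ReflTransGen.head hflip (ih F M' hoddF hM' (by omega))

end Stmt5


/-- Every finite factor-critical graph (on at least one vertex) is reconfigurable. -/
theorem stmt5 {V : Type*} [Fintype V] [Nonempty V] (G : SimpleGraph V)
    (hfc : ∀ v : V, HasPerfectMatchingAvoiding G {v}) :
    Reconfigurable G := by
  intro M M' hM hM'
  exact Stmt5.main hfc (((M \ M') ∪ (M' \ M)).ncard) M M' hM hM' le_rfl
end
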